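/- arXiv:1601.07872 — 7 statements merged into one kernel-verified Lean document; each statement's English description precedes it below -/
import Mathlib

section
/- Under assumptions (H1) and (H3), the functional p_h : L² → ℝ given by p_h(x) = E[K_h(‖X − x‖²_{L²})] is Fréchet differentiable at every x ∈ L², its L² gradient is Dp_h(x) = 2·E[K'_h(‖X − x‖²_{L²})·(x − X)], and sup_{x ∈ L²} ‖Dp_h(x)‖_{L²} ≤ 2K₁. -/
open MeasureTheory ProbabilityTheory Real Set Filter
open scoped InnerProductSpace ENNReal NNReal Topology

noncomputable section

/-- Lebesgue measure restricted to the unit interval `[0,1]`. -/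
def μ01 : Measure ℝ := volume.restrict (Set.Icc (0:ℝ) 1)

/-- The space `L²([0,1])`. -/
abbrev L2 : Type := Lp ℝ 2 μ01

/-- `x'` is a weak derivative of `x`, i.e. `x t = ∫₀ᵗ x'(s) ds` for a.e. `t ∈ [0,1]`. -/
def IsWeakDeriv (x' x : L2) : Prop :=
  ∀ᵐ t ∂μ01, x t = ∫ s in Set.Ioc (0:ℝ) t, x' s

/-- Membership in `H¹₀([0,1])`. -/
def MemH10 (x : L2) : Prop := ∃ x' : L2, IsWeakDeriv x' x

/-- The rescaled kernel `K_h(t) = K(t/h)`. -/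
def Kh (K : ℝ → ℝ) (h : ℝ) : ℝ → ℝ := fun t => K (t / h)

/-- Assumption (H1) on the kernel `K : [0,∞) → [0,∞)`. -/
structure AssumpH1 (K : ℝ → ℝ) (h K0 K1 K2 K3 : ℝ) : Prop where
  contDiff : ContDiff ℝ 3 K
  nonneg : ∀ t : ℝ, 0 ≤ t → 0 ≤ K t
  bound0 : ∀ t : ℝ, 0 ≤ t → |Kh K h (t ^ 2)| ≤ K0
  bound1 : ∀ t : ℝ, 0 ≤ t → |deriv (Kh K h) (t ^ 2) * t| ≤ K1
  bound2 : ∀ t : ℝ, 0 ≤ t →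
    |deriv (Kh K h) (t ^ 2)| + |iteratedDeriv 2 (Kh K h) (t ^ 2) * t ^ 2| ≤ K2
  bound3 : ∀ t : ℝ, 0 ≤ t →
    |iteratedDeriv 2 (Kh K h) (t ^ 2) * t| + |iteratedDeriv 3 (Kh K h) (t ^ 2) * t ^ 3| ≤ K3

/-- Assumption (H2) on the kernel: `K'(t²) + K(t²) ≤ 0` for all `t ≥ 0`. -/
def AssumpH2 (K : ℝ → ℝ) : Prop := ∀ t : ℝ, 0 ≤ t → deriv K (t ^ 2) + K (t ^ 2) ≤ 0

/-- The pseudo-density `p_h(x) = E_P K_h(‖X − x‖²_{L²})`. -/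
def pseudoDensity {Ω : Type*} [MeasurableSpace Ω] (P : Measure Ω) (X : Ω → L2)
    (K : ℝ → ℝ) (h : ℝ) (x : L2) : ℝ :=
  ∫ ω, Kh K h (‖X ω - x‖ ^ 2) ∂P

/-- The L² gradient `Dp_h(x) = 2 E_P [K'_h(‖X − x‖²)(x − X)]`. -/
def pseudoGrad {Ω : Type*} [MeasurableSpace Ω] (P : Measure Ω) (X : Ω → L2)
    (K : ℝ → ℝ) (h : ℝ) (x : L2) : L2 :=
  (2 : ℝ) • ∫ ω, deriv (Kh K h) (‖X ω - x‖ ^ 2) • (x - X ω) ∂P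

/-! Differentiate under the integral sign. The pointwise gradient of `y ↦ g(‖z - y‖²)` is
`2 g'(‖z - y‖²) (y - z)`, whose norm is `2 |g'(t²) t|` with `t = ‖z - y‖`; the bound `K₁` of (H1)
on this quantity therefore both dominates the derivatives uniformly and bounds the integral. -/

section SquaredDistance

variable {E : Type*} [NormedAddCommGroup E] [InnerProductSpace ℝ E]
  {Ω : Type*} [MeasurableSpace Ω] {μ : Measure Ω}

theorem norm_smul_deriv_comp_norm_sub_sq_le {g : ℝ → ℝ} {C : ℝ}
    (hC : ∀ t : ℝ, 0 ≤ t → |deriv g (t ^ 2) * t| ≤ C) (z y : E) :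
    ‖(2 : ℝ) • deriv g (‖z - y‖ ^ 2) • (y - z)‖ ≤ 2 * C := by
  have h := hC ‖z - y‖ (norm_nonneg _)
  rw [norm_smul, norm_smul, norm_sub_rev y z, Real.norm_two, Real.norm_eq_abs, ← abs_norm,
    ← abs_mul, abs_norm]
  linarith

theorem norm_integral_smul_deriv_comp_norm_sub_sq_le [IsProbabilityMeasure μ] {X : Ω → E}
    {g : ℝ → ℝ} {C : ℝ} (hC : ∀ t : ℝ, 0 ≤ t → |deriv g (t ^ 2) * t| ≤ C) (x : E) :
    ‖∫ ω, (2 : ℝ) • deriv g (‖X ω - x‖ ^ 2) • (x - X ω) ∂μ‖ ≤ 2 * C := by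
  simpa using norm_integral_le_of_norm_le_const (μ := μ)
    (.of_forall fun ω => norm_smul_deriv_comp_norm_sub_sq_le hC (X ω) x)

variable [CompleteSpace E]

theorem hasGradientAt_comp_norm_sub_sq {g : ℝ → ℝ} {z y : E}
    (hg : DifferentiableAt ℝ g (‖z - y‖ ^ 2)) :
    HasGradientAt (fun y => g (‖z - y‖ ^ 2)) ((2 : ℝ) • deriv g (‖z - y‖ ^ 2) • (y - z)) y := by
  rw [hasGradientAt_iff_hasFDerivAt]
  refine (hg.hasDerivAt.comp_hasFDerivAt y ((hasFDerivAt_id y).const_sub z).norm_sq).congr_fderiv ?_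
  ext w
  simp
  ring

theorem hasGradientAt_integral_comp_norm_sub_sq [IsFiniteMeasure μ] {X : Ω → E}
    (hX : AEStronglyMeasurable X μ) {g : ℝ → ℝ} (hg : ContDiff ℝ 1 g) {C : ℝ} (hC : ∀ t : ℝ, 0 ≤ t → |deriv g (t ^ 2) * t| ≤ C)
    {x : E} (hint : Integrable (fun ω => g (‖X ω - x‖ ^ 2)) μ) :
    HasGradientAt (fun y => ∫ ω, g (‖X ω - y‖ ^ 2) ∂μ)
      (∫ ω, (2 : ℝ) • deriv g (‖X ω - x‖ ^ 2) • (x - X ω) ∂μ) x := by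
  set D := InnerProductSpace.toDual ℝ E
  have hderiv : ∀ z y : E, HasFDerivAt (fun y => g (‖z - y‖ ^ 2))
      (D ((2 : ℝ) • deriv g (‖z - y‖ ^ 2) • (y - z))) y := fun z y =>
    hasGradientAt_comp_norm_sub_sq (hg.differentiable one_ne_zero _)
  have hbound : ∀ z y : E, ‖D ((2 : ℝ) • deriv g (‖z - y‖ ^ 2) • (y - z))‖ ≤ 2 * C := by
    intro z y
    rw [LinearIsometryEquiv.norm_map]
    exact norm_smul_deriv_comp_norm_sub_sq_le hC z y
  have hg_cont := hg.continuous
  have hg'_cont := hg.continuous_deriv le_rfl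
  have hgrad_meas : AEStronglyMeasurable
      (fun ω => (2 : ℝ) • deriv g (‖X ω - x‖ ^ 2) • (x - X ω)) μ :=
    (show Continuous fun z : E => (2 : ℝ) • deriv g (‖z - x‖ ^ 2) • (x - z) by fun_prop)
      |>.comp_aestronglyMeasurable hX
  have hgrad_int : Integrable (fun ω => (2 : ℝ) • deriv g (‖X ω - x‖ ^ 2) • (x - X ω)) μ :=
    .of_bound hgrad_meas (2 * C) (.of_forall fun ω => norm_smul_deriv_comp_norm_sub_sq_le hC _ _)
  have hcomm : D (∫ ω, (2 : ℝ) • deriv g (‖X ω - x‖ ^ 2) • (x - X ω) ∂μ)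
      = ∫ ω, D ((2 : ℝ) • deriv g (‖X ω - x‖ ^ 2) • (x - X ω)) ∂μ :=
    (ContinuousLinearMap.integral_comp_commSL (by simp)
      D.toContinuousLinearEquiv.toContinuousLinearMap hgrad_int).symm
  rw [hasGradientAt_iff_hasFDerivAt, hcomm]
  exact hasFDerivAt_integral_of_dominated_of_fderiv_le (Metric.ball_mem_nhds x one_pos)
    (.of_forall fun y => (show Continuous fun z : E => g (‖z - y‖ ^ 2) by fun_prop)
      |>.comp_aestronglyMeasurable hX)
    hint (D.continuous.comp_aestronglyMeasurable hgrad_meas)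
    (.of_forall fun ω y _ => hbound (X ω) y) (integrable_const _)
    (.of_forall fun ω y _ => hderiv (X ω) y)

end SquaredDistance

theorem statement0_general
    {Ω : Type*} [MeasurableSpace Ω] (P : Measure Ω) [IsProbabilityMeasure P]
    (X : Ω → L2) (K : ℝ → ℝ) (h K0 K1 K2 K3 : ℝ)
    (hH1 : AssumpH1 K h K0 K1 K2 K3)
    (hXmeas : AEStronglyMeasurable X P) :
    ∀ x : L2,
      HasGradientAt (pseudoDensity P X K h) (pseudoGrad P X K h x) x ∧
      ‖pseudoGrad P X K h x‖ ≤ 2 * K1 := by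
  intro x
  have hKh : ContDiff ℝ 1 (Kh K h) :=
    (hH1.contDiff.comp (contDiff_id.div_const h)).of_le (by norm_num)
  have hint : Integrable (fun ω => Kh K h (‖X ω - x‖ ^ 2)) P :=
    have := hKh.continuous
    .of_bound ((show Continuous fun z : L2 => Kh K h (‖z - x‖ ^ 2) by fun_prop)
      |>.comp_aestronglyMeasurable hXmeas) K0
      (.of_forall fun ω => hH1.bound0 _ (norm_nonneg _))
  have hgrad : pseudoGrad P X K h x
      = ∫ ω, (2 : ℝ) • deriv (Kh K h) (‖X ω - x‖ ^ 2) • (x - X ω) ∂P :=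
    (integral_smul _ _).symm
  rw [hgrad]
  exact ⟨hasGradientAt_integral_comp_norm_sub_sq hXmeas hKh hH1.bound1 hint,
    norm_integral_smul_deriv_comp_norm_sub_sq_le hH1.bound1 x⟩

/-- Under (H1) and (H3), `p_h` is Fréchet differentiable at every `x ∈ L²`,
its L² gradient is `Dp_h(x) = 2 E[K'_h(‖X − x‖²)(x − X)]`, and `‖Dp_h(x)‖ ≤ 2K₁` for all `x`. -/
theorem statement0
    {Ω : Type*} [MeasurableSpace Ω] (P : Measure Ω) [IsProbabilityMeasure P]
    (X : Ω → L2) (K : ℝ → ℝ) (h K0 K1 K2 K3 M1 : ℝ) (hh : 0 < h)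
    (hH1 : AssumpH1 K h K0 K1 K2 K3)
    (hXmeas : AEStronglyMeasurable X P)
    (hXint : Integrable (fun ω => ‖X ω‖) P)
    (hM1 : (∫ ω, ‖X ω‖ ∂P) ≤ M1) :
    ∀ x : L2,
      HasGradientAt (pseudoDensity P X K h) (pseudoGrad P X K h x) x ∧
      ‖pseudoGrad P X K h x‖ ≤ 2 * K1 :=
  statement0_general P X K h K0 K1 K2 K3 hH1 hXmeas

end
end

section
/- Under assumptions (H1) and (H3), the functional p_h is twice Fréchet differentiable at every x ∈ L², its second Fréchet derivative is the symmetric bilinear form D²p_h(x)(z₁,z₂) = E[4·K''_h(‖X − x‖²_{L²})·⟨x − X, z₁⟩_{L²}·⟨x − X, z₂⟩_{L²} + 2·K'_h(‖X − x‖²_{L²})·⟨z₁,z₂⟩_{L²}] for z₁,z₂ ∈ L², and the operator norm of D²p_h(x) is bounded uniformly in x ∈ L² by a constant depending only on K₁ and K₂. -/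
open MeasureTheory ProbabilityTheory Real Set Filter
open scoped InnerProductSpace ENNReal NNReal Topology

noncomputable section

/-!
For a fixed sample point `v`, the map `x ↦ G (‖v - x‖²)` has first derivative
`2 G'(r) ⟪x - v, ·⟫` and second derivative `4 G''(r) ⟪x - v, ·⟫ ⟪x - v, ·⟫ + 2 G'(r) ⟪·, ·⟫`,
where `r = ‖v - x‖²`. Their operator norms are at most `2 |G'(r)| √r` and
`2 |G'(r)| + 4 |G''(r)| r`, which are exactly the quantities bounded by `K₁` and `K₂` in (H1).
Constants are integrable under a probability measure, so both derivatives can be taken under the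
expectation, and the norm of the averaged Hessian is at most `4 K₂`.
-/

theorem hasFDerivAt_integral_of_forall_norm_fderiv_le {Ω E F : Type*} [MeasurableSpace Ω]
    {P : Measure Ω} [IsFiniteMeasure P] [NormedAddCommGroup E] [NormedSpace ℝ E]
    [NormedAddCommGroup F] [NormedSpace ℝ F] {f : E → Ω → F} {f' : E → Ω → E →L[ℝ] F} {C : ℝ}
    {x₀ : E} (hf_meas : ∀ x, AEStronglyMeasurable (f x) P) (hf_int : Integrable (f x₀) P)
    (hf'_meas : AEStronglyMeasurable (f' x₀) P) (hf' : ∀ x ω, HasFDerivAt (f · ω) (f' x ω) x)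
    (hf'_le : ∀ x ω, ‖f' x ω‖ ≤ C) :
    HasFDerivAt (fun x => ∫ ω, f x ω ∂P) (∫ ω, f' x₀ ω ∂P) x₀ :=
  hasFDerivAt_integral_of_dominated_of_fderiv_le (s := univ) (bound := fun _ => C) univ_mem
    (.of_forall hf_meas) hf_int hf'_meas (.of_forall fun ω x _ => hf'_le x ω)
    (integrable_const C) (.of_forall fun ω x _ => hf' x ω)

section RadialKernel

variable {E : Type*} [NormedAddCommGroup E] [InnerProductSpace ℝ E]

/-- `innerSL ℝ` is typed as conjugate-linear in its first argument; this copy with the bilinear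
type is the same map, but can be added to other bilinear maps. -/
def realInnerSL : E →L[ℝ] E →L[ℝ] ℝ := innerSL ℝ

@[simp]
theorem realInnerSL_apply_apply (z₁ z₂ : E) : realInnerSL z₁ z₂ = ⟪z₁, z₂⟫_ℝ := rfl

theorem norm_realInnerSL_le : ‖(realInnerSL : E →L[ℝ] E →L[ℝ] ℝ)‖ ≤ 1 := norm_innerSL_le ℝ

variable (G : ℝ → ℝ)

def radialGrad (v x : E) : E →L[ℝ] ℝ :=
  (2 * deriv G (‖v - x‖ ^ 2)) • innerSL ℝ (x - v)

def radialHess (v x : E) : E →L[ℝ] E →L[ℝ] ℝ :=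
  (4 * iteratedDeriv 2 G (‖v - x‖ ^ 2)) • (innerSL ℝ (x - v)).smulRight (innerSL ℝ (x - v)) +
    (2 * deriv G (‖v - x‖ ^ 2)) • realInnerSL

theorem radialHess_apply (v x z₁ z₂ : E) :
    radialHess G v x z₁ z₂ =
      4 * iteratedDeriv 2 G (‖v - x‖ ^ 2) * ⟪x - v, z₁⟫_ℝ * ⟪x - v, z₂⟫_ℝ
        + 2 * deriv G (‖v - x‖ ^ 2) * ⟪z₁, z₂⟫_ℝ := by
  simp only [radialHess, add_apply, smul_apply, ContinuousLinearMap.smulRight_apply,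
    innerSL_apply_apply, realInnerSL_apply_apply, smul_eq_mul]
  ring

theorem hasFDerivAt_norm_sub_sq (v x : E) :
    HasFDerivAt (fun y => ‖v - y‖ ^ 2) ((2 : ℝ) • innerSL ℝ (x - v)) x := by
  simp_rw [norm_sub_rev v]
  refine ((hasFDerivAt_id x).sub_const v).norm_sq.congr_fderiv ?_
  ext z
  simp

variable {G}

theorem hasFDerivAt_comp_norm_sub_sq {v x : E} (hG : DifferentiableAt ℝ G (‖v - x‖ ^ 2)) :
    HasFDerivAt (fun y => G (‖v - y‖ ^ 2)) (radialGrad G v x) x := by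
  refine (hG.hasDerivAt.comp_hasFDerivAt x (hasFDerivAt_norm_sub_sq v x)).congr_fderiv ?_
  rw [smul_smul, mul_comm, radialGrad]

theorem hasFDerivAt_radialGrad {v x : E} (hG : DifferentiableAt ℝ (deriv G) (‖v - x‖ ^ 2)) :
    HasFDerivAt (radialGrad G v) (radialHess G v x) x := by
  have hG' : HasDerivAt (deriv G) (iteratedDeriv 2 G (‖v - x‖ ^ 2)) (‖v - x‖ ^ 2) := by
    rw [iteratedDeriv_succ, iteratedDeriv_one]
    exact hG.hasDerivAt
  have hcoeff := (hG'.comp_hasFDerivAt x (hasFDerivAt_norm_sub_sq v x)).const_mul (2 : ℝ)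
  have hinner : HasFDerivAt (fun y : E => innerSL ℝ (y - v)) realInnerSL x :=
    realInnerSL.hasFDerivAt.comp x ((hasFDerivAt_id x).sub_const v)
  refine (hcoeff.smul hinner).congr_fderiv ?_
  ext z₁ z₂
  simp [radialHess_apply, inner_sub_left]
  ring

theorem norm_radialGrad_le {C : ℝ} (hG : ∀ t, 0 ≤ t → |deriv G (t ^ 2) * t| ≤ C) (v x : E) :
    ‖radialGrad G v x‖ ≤ 2 * C := by
  have h := hG ‖v - x‖ (norm_nonneg _)
  rw [abs_mul, abs_norm] at h
  calc ‖radialGrad G v x‖ ≤ 2 * (|deriv G (‖v - x‖ ^ 2)| * ‖v - x‖) := by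
        refine (ContinuousLinearMap.opNorm_smul_le _ _).trans_eq ?_
        rw [innerSL_apply_norm, norm_sub_rev x v, norm_mul, Real.norm_two, Real.norm_eq_abs,
          mul_assoc]
    _ ≤ 2 * C := by gcongr

theorem norm_radialHess_le {C : ℝ}
    (hG : ∀ t, 0 ≤ t → |deriv G (t ^ 2)| + |iteratedDeriv 2 G (t ^ 2) * t ^ 2| ≤ C) (v x : E) :
    ‖radialHess G v x‖ ≤ 4 * C := by
  set r := ‖v - x‖ ^ 2
  have h := hG ‖v - x‖ (norm_nonneg _)
  rw [abs_mul, abs_of_nonneg (by positivity : (0 : ℝ) ≤ r)] at h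
  have hrank1 : ‖(4 * iteratedDeriv 2 G r) • (innerSL ℝ (x - v)).smulRight (innerSL ℝ (x - v))‖
      ≤ 4 * |iteratedDeriv 2 G r| * r := by
    refine (ContinuousLinearMap.opNorm_smul_le _ _).trans_eq ?_
    rw [ContinuousLinearMap.norm_smulRight_apply, innerSL_apply_norm, norm_sub_rev x v,
      norm_mul, Real.norm_eq_abs, Real.norm_eq_abs, abs_of_pos four_pos]
    ring
  have hinner : ‖(2 * deriv G r) • (realInnerSL : E →L[ℝ] E →L[ℝ] ℝ)‖ ≤ 2 * |deriv G r| := by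
    refine (ContinuousLinearMap.opNorm_smul_le _ _).trans ?_
    rw [norm_mul, Real.norm_two, Real.norm_eq_abs]
    exact mul_le_of_le_one_right (by positivity) norm_realInnerSL_le
  calc ‖radialHess G v x‖ ≤ 4 * |iteratedDeriv 2 G r| * r + 2 * |deriv G r| :=
        (norm_add_le (E := E →L[ℝ] E →L[ℝ] ℝ) _ _).trans (add_le_add hrank1 hinner)
    _ ≤ 4 * C := by linarith [abs_nonneg (deriv G r)]

theorem continuous_radialGrad (hG : Continuous (deriv G)) (x : E) :
    Continuous fun v => radialGrad G v x := by
  unfold radialGrad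
  fun_prop

theorem continuous_radialHess (hG : Continuous (deriv G)) (hG' : Continuous (iteratedDeriv 2 G))
    (x : E) : Continuous fun v => radialHess G v x := by
  have hinner : Continuous fun v : E => innerSL ℝ (x - v) := by fun_prop
  have hrank1 : Continuous fun v : E => (innerSL ℝ (x - v)).smulRight (innerSL ℝ (x - v)) :=
    (isBoundedBilinearMap_smulRight :
      IsBoundedBilinearMap ℝ fun p : (E →L[ℝ] ℝ) × (E →L[ℝ] ℝ) => p.1.smulRight p.2).continuous.comp
      (hinner.prodMk hinner)
  have hr : Continuous fun v : E => ‖v - x‖ ^ 2 := by fun_prop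
  exact ((continuous_const.mul (hG'.comp hr)).smul hrank1).add
    ((continuous_const.mul (hG.comp hr)).smul continuous_const)

end RadialKernel

section Expectation

variable {E : Type*} [NormedAddCommGroup E] [InnerProductSpace ℝ E] {G : ℝ → ℝ}
  {Ω : Type*} [MeasurableSpace Ω] {P : Measure Ω} {X : Ω → E}

theorem aestronglyMeasurable_radialGrad (hG : ContDiff ℝ 1 G) (hX : AEStronglyMeasurable X P)
    (x : E) : AEStronglyMeasurable (fun ω => radialGrad G (X ω) x) P :=
  (continuous_radialGrad (hG.continuous_deriv le_rfl) x).comp_aestronglyMeasurable hX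

theorem aestronglyMeasurable_radialHess (hG : ContDiff ℝ 2 G) (hX : AEStronglyMeasurable X P)
    (x : E) : AEStronglyMeasurable (fun ω => radialHess G (X ω) x) P :=
  (continuous_radialHess (hG.continuous_deriv one_le_two)
    (hG.continuous_iteratedDeriv 2 le_rfl) x).comp_aestronglyMeasurable hX

theorem hasFDerivAt_integral_comp_norm_sub_sq [IsFiniteMeasure P] (hG : ContDiff ℝ 1 G)
    {C₀ C₁ : ℝ} (hG₀ : ∀ t, 0 ≤ t → |G (t ^ 2)| ≤ C₀)
    (hG₁ : ∀ t, 0 ≤ t → |deriv G (t ^ 2) * t| ≤ C₁) (hX : AEStronglyMeasurable X P) (x : E) :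
    HasFDerivAt (fun y => ∫ ω, G (‖X ω - y‖ ^ 2) ∂P) (∫ ω, radialGrad G (X ω) x ∂P) x := by
  have hmeas (y : E) : AEStronglyMeasurable (fun ω => G (‖X ω - y‖ ^ 2)) P :=
    (hG.continuous.comp (by fun_prop : Continuous fun v : E => ‖v - y‖ ^ 2)
      ).comp_aestronglyMeasurable hX
  exact hasFDerivAt_integral_of_forall_norm_fderiv_le (f := fun y ω => G (‖X ω - y‖ ^ 2)) hmeas
    (.of_bound (hmeas x) C₀ (.of_forall fun ω => by simpa using hG₀ _ (norm_nonneg _)))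
    (aestronglyMeasurable_radialGrad hG hX x)
    (fun _ _ => hasFDerivAt_comp_norm_sub_sq (hG.differentiable one_ne_zero _))
    (fun y ω => norm_radialGrad_le hG₁ (X ω) y)

theorem hasFDerivAt_integral_radialGrad [IsFiniteMeasure P] (hG : ContDiff ℝ 2 G)
    {C₁ C₂ : ℝ} (hG₁ : ∀ t, 0 ≤ t → |deriv G (t ^ 2) * t| ≤ C₁)
    (hG₂ : ∀ t, 0 ≤ t → |deriv G (t ^ 2)| + |iteratedDeriv 2 G (t ^ 2) * t ^ 2| ≤ C₂)
    (hX : AEStronglyMeasurable X P) (x : E) :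
    HasFDerivAt (fun y => ∫ ω, radialGrad G (X ω) y ∂P) (∫ ω, radialHess G (X ω) x ∂P) x :=
  hasFDerivAt_integral_of_forall_norm_fderiv_le
    (aestronglyMeasurable_radialGrad (hG.of_le one_le_two) hX)
    (.of_bound (aestronglyMeasurable_radialGrad (hG.of_le one_le_two) hX x) _
      (.of_forall fun ω => norm_radialGrad_le hG₁ (X ω) x))
    (aestronglyMeasurable_radialHess hG hX x)
    (fun _ _ => hasFDerivAt_radialGrad (hG.differentiable_deriv_two _))
    (fun y ω => norm_radialHess_le hG₂ (X ω) y)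

theorem integral_radialHess_apply [IsFiniteMeasure P] (hG : ContDiff ℝ 2 G) {C₂ : ℝ}
    (hG₂ : ∀ t, 0 ≤ t → |deriv G (t ^ 2)| + |iteratedDeriv 2 G (t ^ 2) * t ^ 2| ≤ C₂)
    (hX : AEStronglyMeasurable X P) (x z₁ z₂ : E) :
    (∫ ω, radialHess G (X ω) x ∂P) z₁ z₂ =
      ∫ ω, (4 * iteratedDeriv 2 G (‖X ω - x‖ ^ 2) * ⟪x - X ω, z₁⟫_ℝ * ⟪x - X ω, z₂⟫_ℝ
        + 2 * deriv G (‖X ω - x‖ ^ 2) * ⟪z₁, z₂⟫_ℝ) ∂P := by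
  -- The nested operator space carries two instance paths to its norm; naming the type selects
  -- the normed-group one that the integration lemmas expect.
  have hint := Integrable.of_bound (E := E →L[ℝ] E →L[ℝ] ℝ)
    (aestronglyMeasurable_radialHess hG hX x) _
    (.of_forall fun ω => norm_radialHess_le hG₂ (X ω) x)
  rw [ContinuousLinearMap.integral_apply hint,
    ContinuousLinearMap.integral_apply (hint.apply_continuousLinearMap z₁)]
  simp only [radialHess_apply]

theorem norm_integral_radialHess_le [IsProbabilityMeasure P] {C₂ : ℝ}
    (hG₂ : ∀ t, 0 ≤ t → |deriv G (t ^ 2)| + |iteratedDeriv 2 G (t ^ 2) * t ^ 2| ≤ C₂) (x : E) :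
    ‖∫ ω, radialHess G (X ω) x ∂P‖ ≤ 4 * C₂ := by
  refine (norm_integral_le_of_norm_le_const (G := E →L[ℝ] E →L[ℝ] ℝ)
    (.of_forall fun ω => norm_radialHess_le hG₂ (X ω) x)).trans_eq ?_
  simp

end Expectation

theorem statement1_general
    {Ω : Type*} [MeasurableSpace Ω] (P : Measure Ω) [IsProbabilityMeasure P]
    (X : Ω → L2) (K : ℝ → ℝ) (h K0 K1 K2 K3 : ℝ)
    (hH1 : AssumpH1 K h K0 K1 K2 K3)
    (hXmeas : AEStronglyMeasurable X P) :
    ∃ (D1 : L2 → (L2 →L[ℝ] ℝ)) (D2 : L2 → (L2 →L[ℝ] (L2 →L[ℝ] ℝ))),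
      ∀ x : L2,
        HasFDerivAt (pseudoDensity P X K h) (D1 x) x ∧
        HasFDerivAt D1 (D2 x) x ∧
        (∀ z₁ z₂ : L2, D2 x z₁ z₂ =
          ∫ ω, (4 * iteratedDeriv 2 (Kh K h) (‖X ω - x‖ ^ 2) * ⟪x - X ω, z₁⟫_ℝ * ⟪x - X ω, z₂⟫_ℝ
            + 2 * deriv (Kh K h) (‖X ω - x‖ ^ 2) * ⟪z₁, z₂⟫_ℝ) ∂P) ∧
        (∀ z₁ z₂ : L2, D2 x z₁ z₂ = D2 x z₂ z₁) ∧
        ‖D2 x‖ ≤ 4 * K2 := by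
  have hG : ContDiff ℝ 2 (Kh K h) :=
    (hH1.contDiff.comp (contDiff_id.div_const h)).of_le (by norm_num)
  have hformula := integral_radialHess_apply hG hH1.bound2 hXmeas
  refine ⟨fun x => ∫ ω, radialGrad (Kh K h) (X ω) x ∂P,
    fun x => ∫ ω, radialHess (Kh K h) (X ω) x ∂P, fun x => ⟨?_, ?_, hformula x, fun z₁ z₂ => ?_,
      norm_integral_radialHess_le hH1.bound2 x⟩⟩
  · exact hasFDerivAt_integral_comp_norm_sub_sq (hG.of_le one_le_two) hH1.bound0 hH1.bound1 hXmeas x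
  · exact hasFDerivAt_integral_radialGrad hG hH1.bound1 hH1.bound2 hXmeas x
  · simp only [hformula, real_inner_comm z₁ z₂, mul_right_comm _ ⟪x - _, z₁⟫_ℝ]

/-- Under (H1) and (H3), `p_h` is twice Fréchet differentiable at every
`x ∈ L²`, its second Fréchet derivative is the symmetric bilinear form
`D²p_h(x)(z₁,z₂) = E[4 K''_h(‖X−x‖²) ⟨x−X,z₁⟩ ⟨x−X,z₂⟩ + 2 K'_h(‖X−x‖²) ⟨z₁,z₂⟩]`,
and its operator norm is bounded uniformly in `x` by a constant depending only on
`K₁` and `K₂` (namely by `4K₂`). -/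
theorem statement1
    {Ω : Type*} [MeasurableSpace Ω] (P : Measure Ω) [IsProbabilityMeasure P]
    (X : Ω → L2) (K : ℝ → ℝ) (h K0 K1 K2 K3 M1 : ℝ) (hh : 0 < h)
    (hH1 : AssumpH1 K h K0 K1 K2 K3)
    (hXmeas : AEStronglyMeasurable X P)
    (hXint : Integrable (fun ω => ‖X ω‖) P)
    (hM1 : (∫ ω, ‖X ω‖ ∂P) ≤ M1) :
    ∃ (D1 : L2 → (L2 →L[ℝ] ℝ)) (D2 : L2 → (L2 →L[ℝ] (L2 →L[ℝ] ℝ))),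
      ∀ x : L2,
        HasFDerivAt (pseudoDensity P X K h) (D1 x) x ∧
        HasFDerivAt D1 (D2 x) x ∧
        (∀ z₁ z₂ : L2, D2 x z₁ z₂ =
          ∫ ω, (4 * iteratedDeriv 2 (Kh K h) (‖X ω - x‖ ^ 2) * ⟪x - X ω, z₁⟫_ℝ * ⟪x - X ω, z₂⟫_ℝ
            + 2 * deriv (Kh K h) (‖X ω - x‖ ^ 2) * ⟪z₁, z₂⟫_ℝ) ∂P) ∧
        (∀ z₁ z₂ : L2, D2 x z₁ z₂ = D2 x z₂ z₁) ∧
        ‖D2 x‖ ≤ 4 * K2 :=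
  statement1_general P X K h K0 K1 K2 K3 hH1 hXmeas

end
end

section
/- Under assumptions (H1) and (H3), for every x ∈ H¹₀ the L² gradient Dp_h(x) is itself an element of H¹₀, its weak derivative satisfies ⟨(Dp_h(x))', y⟩_{L²} = 2·E[K'_h(‖X − x‖²_{L²})·⟨x' − X', y⟩_{L²}] for every y ∈ L², and ‖Dp_h(x)‖_{H¹₀} ≤ 2K₂(‖x‖_{H¹₀} + N₁). -/
open MeasureTheory ProbabilityTheory Real Set Filter
open scoped InnerProductSpace ENNReal NNReal Topology

noncomputable section

/-!
The map `V f = (t ↦ ∫₀ᵗ f)` is a bounded linear operator on `L²([0,1])` (Cauchy–Schwarz gives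
`|∫₀ᵗ f| ≤ ‖f‖`), and `x'` is a weak derivative of `x` exactly when `x = V x'`. Since
`x - X = V (x' - X')` almost surely and a continuous linear map commutes with the Bochner
integral, `Dp_h(x) = 2 E[K'_h(‖X - x‖²) (x - X)]` equals `V` applied to
`g' = 2 E[K'_h(‖X - x‖²) (x' - X')]`. The inner product formula is then linearity of the
integral, and the norm bound follows from `|K'_h(t²)| ≤ K₂`.
-/

instance : IsProbabilityMeasure μ01 :=
  ⟨by simp [μ01, Real.volume_Icc]⟩

instance : NullSingletonClass μ01 := by
  unfold μ01
  infer_instance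

theorem integrable_L2 (f : L2) : Integrable f μ01 :=
  (Lp.memLp f).integrable one_le_two

theorem abs_setIntegral_le_norm_L2 (f : L2) {s : Set ℝ} (hs : MeasurableSet s) :
    |∫ t in s, f t ∂μ01| ≤ ‖f‖ := by
  have hμs : μ01 s ≠ ∞ := measure_ne_top μ01 s
  have hχ : ‖indicatorConstLp 2 hs hμs (1 : ℝ)‖ ≤ 1 := by
    refine (norm_indicatorConstLp_le).trans ?_
    rw [norm_one, one_mul]
    exact Real.rpow_le_one measureReal_nonneg measureReal_le_one (by norm_num)
  rw [← L2.inner_indicatorConstLp_one hs hμs f]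
  exact (abs_real_inner_le_norm _ _).trans (mul_le_of_le_one_left (norm_nonneg f) hχ)

def primitive (f : L2) (t : ℝ) : ℝ := ∫ s in (0 : ℝ)..t, f s ∂μ01

theorem continuous_primitive (f : L2) : Continuous (primitive f) :=
  intervalIntegral.continuous_primitive (fun _ _ => (integrable_L2 f).intervalIntegrable) 0

theorem abs_primitive_le (f : L2) (t : ℝ) : |primitive f t| ≤ ‖f‖ := by
  rw [primitive, ← Real.norm_eq_abs, intervalIntegral.norm_integral_eq_norm_integral_uIoc,
    Real.norm_eq_abs]
  exact abs_setIntegral_le_norm_L2 f measurableSet_uIoc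

theorem memLp_primitive (f : L2) : MemLp (primitive f) 2 μ01 :=
  MemLp.of_bound (continuous_primitive f).aestronglyMeasurable ‖f‖
    (Eventually.of_forall (abs_primitive_le f))

theorem primitive_add (f g : L2) : primitive (f + g) = primitive f + primitive g := by
  funext t
  rw [primitive, intervalIntegral.integral_congr_ae ((Lp.coeFn_add f g).mono fun _ h _ => h)]
  exact intervalIntegral.integral_add (integrable_L2 f).intervalIntegrable
    (integrable_L2 g).intervalIntegrable

theorem primitive_smul (c : ℝ) (f : L2) : primitive (c • f) = c • primitive f := by
  funext t
  rw [primitive, intervalIntegral.integral_congr_ae ((Lp.coeFn_smul c f).mono fun _ h _ => h)]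
  exact intervalIntegral.integral_smul c _

theorem primitive_eq_setIntegral (f : L2) {t : ℝ} (ht : t ∈ Icc (0 : ℝ) 1) :
    primitive f t = ∫ s in Ioc (0 : ℝ) t, f s := by
  have hμ : μ01.restrict (Ioc 0 t) = volume.restrict (Ioc 0 t) := by
    rw [μ01, Measure.restrict_restrict measurableSet_Ioc,
      inter_eq_left.mpr (Ioc_subset_Icc_self.trans (Icc_subset_Icc_right ht.2))]
  rw [primitive, intervalIntegral.integral_of_le ht.1, hμ]

def volterra : L2 →L[ℝ] L2 :=
  LinearMap.mkContinuous
    { toFun := fun f => (memLp_primitive f).toLp (primitive f)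
      map_add' := fun f g => by
        rw [← MemLp.toLp_add]
        exact MemLp.toLp_congr _ _ (by rw [primitive_add])
      map_smul' := fun c f => by
        rw [RingHom.id_apply, ← MemLp.toLp_const_smul]
        exact MemLp.toLp_congr _ _ (by rw [primitive_smul]) }
    1 fun f => by
      change ‖(memLp_primitive f).toLp (primitive f)‖ ≤ 1 * ‖f‖
      refine (Lp.norm_le_of_ae_bound (norm_nonneg f) ?_).trans_eq ?_
      · filter_upwards [MemLp.coeFn_toLp (memLp_primitive f)] with t ht
        rw [ht]
        exact abs_primitive_le f t
      · simp [measureUnivNNReal]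

theorem coeFn_volterra (f : L2) :
    ⇑(volterra f) =ᵐ[μ01] fun t => ∫ s in Ioc (0 : ℝ) t, f s := by
  filter_upwards [MemLp.coeFn_toLp (memLp_primitive f), ae_restrict_mem measurableSet_Icc]
    with t hV ht
  exact hV.trans (primitive_eq_setIntegral f ht)

theorem isWeakDeriv_iff_eq_volterra {f g : L2} : IsWeakDeriv f g ↔ g = volterra f := by
  rw [Lp.ext_iff]
  exact eventually_congr ((coeFn_volterra f).mono fun t ht => by rw [ht])

theorem IsWeakDeriv.sub {f g u v : L2} (hf : IsWeakDeriv f u) (hg : IsWeakDeriv g v) :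
    IsWeakDeriv (f - g) (u - v) := by
  rw [isWeakDeriv_iff_eq_volterra] at *
  rw [map_sub, hf, hg]

theorem IsWeakDeriv.const_smul {f u : L2} (hf : IsWeakDeriv f u) (c : ℝ) :
    IsWeakDeriv (c • f) (c • u) := by
  rw [isWeakDeriv_iff_eq_volterra] at *
  rw [map_smul, hf]

theorem IsWeakDeriv.integral {Ω : Type*} [MeasurableSpace Ω] {P : Measure Ω} {G G' : Ω → L2}
    (hG' : Integrable G' P) (hG : ∀ᵐ ω ∂P, IsWeakDeriv (G' ω) (G ω)) :
    IsWeakDeriv (∫ ω, G' ω ∂P) (∫ ω, G ω ∂P) := by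
  rw [isWeakDeriv_iff_eq_volterra, ← volterra.integral_comp_comm hG']
  exact integral_congr_ae (hG.mono fun ω hω => isWeakDeriv_iff_eq_volterra.1 hω)

theorem norm_integral_smul_sub_le {Ω E : Type*} [MeasurableSpace Ω] {P : Measure Ω}
    [IsProbabilityMeasure P] [NormedAddCommGroup E] [NormedSpace ℝ E] {c : Ω → ℝ} {C : ℝ}
    (hc : ∀ ω, |c ω| ≤ C) (v : E) {V : Ω → E} (hV : Integrable (fun ω => ‖V ω‖) P) :
    ‖∫ ω, c ω • (v - V ω) ∂P‖ ≤ C * (‖v‖ + ∫ ω, ‖V ω‖ ∂P) := by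
  have hbound : ∀ ω, ‖c ω • (v - V ω)‖ ≤ C * (‖v‖ + ‖V ω‖) := fun ω => by
    rw [norm_smul, Real.norm_eq_abs]
    exact mul_le_mul (hc ω) (norm_sub_le _ _) (norm_nonneg _) ((abs_nonneg _).trans (hc ω))
  calc ‖∫ ω, c ω • (v - V ω) ∂P‖ ≤ ∫ ω, C * (‖v‖ + ‖V ω‖) ∂P :=
        norm_integral_le_of_norm_le (((integrable_const _).add hV).const_mul C)
          (.of_forall hbound)
    _ = C * (‖v‖ + ∫ ω, ‖V ω‖ ∂P) := by
        rw [integral_const_mul, integral_add (integrable_const _) hV, integral_const,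
          probReal_univ, one_smul]

namespace AssumpH1

variable {K : ℝ → ℝ} {h K0 K1 K2 K3 : ℝ}

theorem abs_deriv_Kh_sq_le (hK : AssumpH1 K h K0 K1 K2 K3) {t : ℝ} (ht : 0 ≤ t) :
    |deriv (Kh K h) (t ^ 2)| ≤ K2 :=
  (le_add_of_nonneg_right (abs_nonneg _)).trans (hK.bound2 t ht)

theorem K2_nonneg (hK : AssumpH1 K h K0 K1 K2 K3) : 0 ≤ K2 :=
  (abs_nonneg _).trans (hK.abs_deriv_Kh_sq_le le_rfl)

theorem continuous_deriv_Kh (hK : AssumpH1 K h K0 K1 K2 K3) : Continuous (deriv (Kh K h)) :=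
  (hK.contDiff.comp (contDiff_id.div_const h)).continuous_deriv (by norm_num)

end AssumpH1

theorem statement2_general
    {Ω : Type*} [MeasurableSpace Ω] (P : Measure Ω) [IsProbabilityMeasure P]
    (X X' : Ω → L2) (K : ℝ → ℝ) (h K0 K1 K2 K3 N1 : ℝ)
    (hH1 : AssumpH1 K h K0 K1 K2 K3)
    (hXmeas : AEStronglyMeasurable X P) (hX'meas : AEStronglyMeasurable X' P)
    (hXH10 : ∀ᵐ ω ∂P, IsWeakDeriv (X' ω) (X ω))
    (hX'int : Integrable (fun ω => ‖X' ω‖) P)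
    (hN1 : (∫ ω, ‖X' ω‖ ∂P) ≤ N1)
    (x x' : L2) (hx : IsWeakDeriv x' x) :
    ∃ g' : L2,
      IsWeakDeriv g' (pseudoGrad P X K h x) ∧
      (∀ y : L2, ⟪g', y⟫_ℝ =
        2 * ∫ ω, deriv (Kh K h) (‖X ω - x‖ ^ 2) * ⟪x' - X' ω, y⟫_ℝ ∂P) ∧
      ‖g'‖ ≤ 2 * K2 * (‖x'‖ + N1) := by
  set c : Ω → ℝ := fun ω => deriv (Kh K h) (‖X ω - x‖ ^ 2)
  have hc_le : ∀ ω, |c ω| ≤ K2 := fun ω => hH1.abs_deriv_Kh_sq_le (norm_nonneg _)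
  have hc_meas : AEStronglyMeasurable c P :=
    hH1.continuous_deriv_Kh.comp_aestronglyMeasurable
      ((hXmeas.sub aestronglyMeasurable_const).norm.pow 2)
  have hG' : Integrable (fun ω => c ω • (x' - X' ω)) P :=
    ((integrable_const x').sub ((integrable_norm_iff hX'meas).1 hX'int)).bdd_smul K2 hc_meas
      (.of_forall hc_le)
  refine ⟨(2 : ℝ) • ∫ ω, c ω • (x' - X' ω) ∂P, ?_, fun y => ?_, ?_⟩
  · exact (IsWeakDeriv.integral hG'
      (hXH10.mono fun ω hω => (hx.sub hω).const_smul (c ω))).const_smul 2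
  · rw [real_inner_smul_left, real_inner_comm, ← integral_inner hG']
    simp only [c, inner_smul_right, real_inner_comm y]
  · calc ‖(2 : ℝ) • ∫ ω, c ω • (x' - X' ω) ∂P‖ ≤ 2 * (K2 * (‖x'‖ + ∫ ω, ‖X' ω‖ ∂P)) := by
          rw [norm_smul, Real.norm_two]
          gcongr
          exact norm_integral_smul_sub_le hc_le x' hX'int
      _ ≤ 2 * K2 * (‖x'‖ + N1) := by
          rw [← mul_assoc]
          have := hH1.K2_nonneg
          gcongr

/-- Under (H1) and (H3), for every `x ∈ H¹₀` the L² gradient `Dp_h(x)`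
is itself an element of `H¹₀`, its weak derivative `g'` satisfies
`⟨g', y⟩_{L²} = 2 E[K'_h(‖X − x‖²) ⟨x' − X', y⟩_{L²}]` for every `y ∈ L²`, and
`‖Dp_h(x)‖_{H¹₀} ≤ 2K₂(‖x‖_{H¹₀} + N₁)`. -/
theorem statement2
    {Ω : Type*} [MeasurableSpace Ω] (P : Measure Ω) [IsProbabilityMeasure P]
    (X X' : Ω → L2) (K : ℝ → ℝ) (h K0 K1 K2 K3 M1 N1 : ℝ) (hh : 0 < h)
    (hH1 : AssumpH1 K h K0 K1 K2 K3)
    (hXmeas : AEStronglyMeasurable X P) (hX'meas : AEStronglyMeasurable X' P)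
    (hXH10 : ∀ᵐ ω ∂P, IsWeakDeriv (X' ω) (X ω))
    (hXint : Integrable (fun ω => ‖X ω‖) P) (hX'int : Integrable (fun ω => ‖X' ω‖) P)
    (hM1 : (∫ ω, ‖X ω‖ ∂P) ≤ M1) (hN1 : (∫ ω, ‖X' ω‖ ∂P) ≤ N1)
    (x x' : L2) (hx : IsWeakDeriv x' x) :
    ∃ g' : L2,
      IsWeakDeriv g' (pseudoGrad P X K h x) ∧
      (∀ y : L2, ⟪g', y⟫_ℝ =
        2 * ∫ ω, deriv (Kh K h) (‖X ω - x‖ ^ 2) * ⟪x' - X' ω, y⟫_ℝ ∂P) ∧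
      ‖g'‖ ≤ 2 * K2 * (‖x'‖ + N1) :=
  statement2_general P X X' K h K0 K1 K2 K3 N1 hH1 hXmeas hX'meas hXH10 hX'int hN1 x x' hx

end
end

section
/- Assume (H1), (H2) and (H3). If x ∈ L² is a nontrivial critical point of p_h (i.e. Dp_h(x) = 0 and p_h(x) > 0), then x ∈ H¹₀. Furthermore, if in addition ‖X‖_{H¹₀} ≤ M almost surely for some M > 0, then every nontrivial critical point x of p_h satisfies ‖x‖_{H¹₀} ≤ M. -/
open MeasureTheory ProbabilityTheory Real Set Filter
open scoped InnerProductSpace ENNReal NNReal Topology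

noncomputable section

namespace L2

lemma integrable (f : L2) : Integrable f μ01 := (Lp.memLp f).integrable one_le_two

lemma integral_norm_le_norm (f : L2) : ∫ t, ‖f t‖ ∂μ01 ≤ ‖f‖ := by
  have h := eLpNorm_le_eLpNorm_of_exponent_le one_le_two (Lp.aestronglyMeasurable f)
  rw [eLpNorm_one_eq_lintegral_enorm, ← ofReal_integral_norm_eq_lintegral_enorm (integrable f)]
    at h
  have := ENNReal.toReal_mono (Lp.eLpNorm_ne_top f) h
  rwa [ENNReal.toReal_ofReal (integral_nonneg fun _ => norm_nonneg _), ← Lp.norm_def] at this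

def primitive (f : L2) (t : ℝ) : ℝ := ∫ s in Ioc 0 t, f s

variable {t : ℝ}

lemma Ioc_subset_unitInterval (ht : t ∈ Icc (0 : ℝ) 1) : Ioc 0 t ⊆ Icc 0 1 :=
  Ioc_subset_Icc_self.trans (Icc_subset_Icc_right ht.2)

lemma integrableOn_Ioc (f : L2) (ht : t ∈ Icc (0 : ℝ) 1) : IntegrableOn f (Ioc 0 t) :=
  IntegrableOn.mono_set (integrable f) (Ioc_subset_unitInterval ht)

lemma norm_primitive_le (f : L2) (ht : t ∈ Icc (0 : ℝ) 1) : ‖primitive f t‖ ≤ ‖f‖ :=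
  calc ‖primitive f t‖ ≤ ∫ s in Ioc 0 t, ‖f s‖ := norm_integral_le_integral_norm _
    _ ≤ ∫ s, ‖f s‖ ∂μ01 := setIntegral_mono_set (integrable f).norm
          (.of_forall fun _ => norm_nonneg _) (Ioc_subset_unitInterval ht).eventuallyLE
    _ ≤ ‖f‖ := integral_norm_le_norm f

lemma ae_restrict_Ioc_of_ae {p : ℝ → Prop} (h : ∀ᵐ s ∂μ01, p s) (ht : t ∈ Icc (0 : ℝ) 1) :
    ∀ᵐ s ∂volume.restrict (Ioc 0 t), p s :=
  ae_restrict_of_ae_restrict_of_subset (Ioc_subset_unitInterval ht) h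

lemma primitive_add (f g : L2) (ht : t ∈ Icc (0 : ℝ) 1) :
    primitive (f + g) t = primitive f t + primitive g t := by
  rw [primitive, integral_congr_ae (ae_restrict_Ioc_of_ae (Lp.coeFn_add f g) ht),
    Pi.add_def, integral_add (integrableOn_Ioc f ht) (integrableOn_Ioc g ht)]
  rfl

lemma primitive_smul (c : ℝ) (f : L2) (ht : t ∈ Icc (0 : ℝ) 1) :
    primitive (c • f) t = c * primitive f t := by
  rw [primitive, integral_congr_ae (ae_restrict_Ioc_of_ae (Lp.coeFn_smul c f) ht)]
  exact integral_const_mul c _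

lemma ae_unitInterval {p : ℝ → Prop} (h : ∀ t ∈ Icc (0 : ℝ) 1, p t) : ∀ᵐ t ∂μ01, p t :=
  ae_restrict_of_forall_mem measurableSet_Icc h

lemma memLp_primitive (f : L2) : MemLp (primitive f) 2 μ01 :=
  .of_bound ((intervalIntegral.continuousOn_primitive (integrable f)).aestronglyMeasurable
    measurableSet_Icc) ‖f‖ (ae_unitInterval fun _ => norm_primitive_le f)

def primitiveLp (f : L2) : L2 := (memLp_primitive f).toLp

lemma primitiveLp_ae_eq (f : L2) : primitiveLp f =ᵐ[μ01] primitive f := MemLp.coeFn_toLp _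

lemma norm_primitiveLp_le (f : L2) : ‖primitiveLp f‖ ≤ ‖f‖ := by
  have hbound : ∀ᵐ t ∂μ01, ‖primitiveLp f t‖ ≤ ‖f‖ := by
    filter_upwards [primitiveLp_ae_eq f, ae_unitInterval fun _ => norm_primitive_le f]
      with t ht hbound
    rwa [ht]
  simpa [measureUnivNNReal] using Lp.norm_le_of_ae_bound (norm_nonneg f) hbound

def volterra : L2 →L[ℝ] L2 :=
  LinearMap.mkContinuous
    { toFun := primitiveLp
      map_add' f g := by
        rw [primitiveLp, primitiveLp, primitiveLp, ← MemLp.toLp_add]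
        exact MemLp.toLp_congr _ _ (ae_unitInterval fun _ => primitive_add f g)
      map_smul' c f := by
        rw [RingHom.id_apply, primitiveLp, primitiveLp, ← MemLp.toLp_const_smul]
        exact MemLp.toLp_congr _ _ (ae_unitInterval fun _ => primitive_smul c f) }
    1 fun f => (one_mul ‖f‖).symm ▸ norm_primitiveLp_le f

lemma volterra_ae_eq (f : L2) : volterra f =ᵐ[μ01] primitive f := primitiveLp_ae_eq f

lemma isWeakDeriv_iff_eq_volterra {x' x : L2} : IsWeakDeriv x' x ↔ x = volterra x' := by
  refine ⟨fun h => Lp.ext (EventuallyEq.trans h (volterra_ae_eq x').symm), ?_⟩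
  rintro rfl
  exact volterra_ae_eq x'

end L2

section WeightedMean

variable {Ω E F : Type*} [MeasurableSpace Ω] {P : Measure Ω}
  [NormedAddCommGroup E] [NormedSpace ℝ E] [NormedAddCommGroup F] [NormedSpace ℝ F] {g : Ω → ℝ}

def weightedMean (P : Measure Ω) (g : Ω → ℝ) (Y : Ω → E) : E :=
  (∫ ω, g ω ∂P)⁻¹ • ∫ ω, g ω • Y ω ∂P

lemma eq_weightedMean_of_integral_smul_sub_eq_zero [CompleteSpace E] {Y : Ω → E} {x : E}
    (hg : Integrable g P) (hgY : Integrable (fun ω => g ω • Y ω) P) (hg0 : ∫ ω, g ω ∂P ≠ 0)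
    (h : ∫ ω, g ω • (x - Y ω) ∂P = 0) : x = weightedMean P g Y := by
  simp_rw [smul_sub] at h
  rw [integral_sub (hg.smul_const x) hgY, integral_smul_const, sub_eq_zero] at h
  rw [weightedMean, ← h, inv_smul_smul₀ hg0]

lemma weightedMean_eq_map_weightedMean [CompleteSpace E] [CompleteSpace F] (T : E →L[ℝ] F)
    {Y : Ω → E} {Z : Ω → F}
    (hZ : ∀ᵐ ω ∂P, Z ω = T (Y ω)) (hgY : Integrable (fun ω => g ω • Y ω) P) :
    weightedMean P g Z = T (weightedMean P g Y) := by
  have hgZ : ∫ ω, g ω • Z ω ∂P = ∫ ω, T (g ω • Y ω) ∂P :=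
    integral_congr_ae (hZ.mono fun ω hω => by dsimp only; rw [hω, map_smul])
  rw [weightedMean, weightedMean, hgZ, T.integral_comp_comm hgY, map_smul]

lemma norm_weightedMean_le {Y : Ω → E} {M : ℝ} (hg : Integrable g P)
    (hg_nonpos : ∀ᵐ ω ∂P, g ω ≤ 0) (hY : ∀ᵐ ω ∂P, ‖Y ω‖ ≤ M) (hM : 0 ≤ M) :
    ‖weightedMean P g Y‖ ≤ M := by
  have hbound : ‖∫ ω, g ω • Y ω ∂P‖ ≤ |∫ ω, g ω ∂P| * M :=
    calc ‖∫ ω, g ω • Y ω ∂P‖ ≤ ∫ ω, -g ω * M ∂P := by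
          refine norm_integral_le_of_norm_le (hg.neg.mul_const M) ?_
          filter_upwards [hg_nonpos, hY] with ω hgω hYω
          rw [norm_smul, Real.norm_of_nonpos hgω]
          exact mul_le_mul_of_nonneg_left hYω (neg_nonneg.2 hgω)
      _ = |∫ ω, g ω ∂P| * M := by
          rw [integral_mul_const, integral_neg, abs_of_nonpos (integral_nonpos_of_ae hg_nonpos)]
  rw [weightedMean, norm_smul, norm_inv, Real.norm_eq_abs]
  rcases (abs_nonneg (∫ ω, g ω ∂P)).eq_or_lt with h0 | hpos
  · simp [← h0, hM]
  · exact (inv_mul_le_iff₀ hpos).2 hbound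

end WeightedMean

section Kernel

variable {K : ℝ → ℝ} {h : ℝ}

lemma hasDerivAt_Kh {t : ℝ} (hK : DifferentiableAt ℝ K (t / h)) :
    HasDerivAt (Kh K h) (deriv K (t / h) / h) t := by
  rw [← mul_one_div]
  exact hK.hasDerivAt.comp t ((hasDerivAt_id' t).div_const h)

lemma deriv_Kh (hK : Differentiable ℝ K) : deriv (Kh K h) = fun t => deriv K (t / h) / h :=
  funext fun _ => (hasDerivAt_Kh (hK _)).deriv

lemma continuous_deriv_Kh (hK : ContDiff ℝ 1 K) : Continuous (deriv (Kh K h)) := by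
  rw [deriv_Kh (hK.differentiable one_ne_zero)]
  exact ((hK.continuous_deriv le_rfl).comp (continuous_id.div_const h)).div_const h

lemma deriv_Kh_le_neg_Kh_div (hK : Differentiable ℝ K) (hH2 : AssumpH2 K) (hh : 0 < h) {s : ℝ}
    (hs : 0 ≤ s) : deriv (Kh K h) s ≤ -(Kh K h s / h) := by
  have h2 := hH2 √(s / h) (sqrt_nonneg _)
  rw [sq_sqrt (div_nonneg hs hh.le)] at h2
  rw [deriv_Kh hK, Kh, ← neg_div]
  exact div_le_div_of_nonneg_right (by linarith) hh.le

end Kernel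

section CriticalPoint

variable {Ω : Type*} {X : Ω → L2} {K : ℝ → ℝ} {h K0 K1 K2 K3 : ℝ} {x : L2}

def pseudoGradWeight (X : Ω → L2) (K : ℝ → ℝ) (h : ℝ) (x : L2) (ω : Ω) : ℝ :=
  deriv (Kh K h) (‖X ω - x‖ ^ 2)

lemma pseudoGradWeight_le (hh : 0 < h) (hH1 : AssumpH1 K h K0 K1 K2 K3) (hH2 : AssumpH2 K)
    (ω : Ω) : pseudoGradWeight X K h x ω ≤ -(Kh K h (‖X ω - x‖ ^ 2) / h) :=
  deriv_Kh_le_neg_Kh_div (hH1.contDiff.differentiable (by norm_num)) hH2 hh (sq_nonneg _)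

lemma pseudoGradWeight_nonpos (hh : 0 < h) (hH1 : AssumpH1 K h K0 K1 K2 K3)
    (hH2 : AssumpH2 K) (ω : Ω) : pseudoGradWeight X K h x ω ≤ 0 :=
  (pseudoGradWeight_le hh hH1 hH2 ω).trans
    (neg_nonpos.2 (div_nonneg (hH1.nonneg _ (div_nonneg (sq_nonneg _) hh.le)) hh.le))

lemma abs_pseudoGradWeight_le (hH1 : AssumpH1 K h K0 K1 K2 K3) (ω : Ω) :
    |pseudoGradWeight X K h x ω| ≤ K2 :=
  (le_add_of_nonneg_right (abs_nonneg _)).trans (hH1.bound2 _ (norm_nonneg _))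

variable [MeasurableSpace Ω] {P : Measure Ω}

lemma aestronglyMeasurable_pseudoGradWeight (hH1 : AssumpH1 K h K0 K1 K2 K3)
    (hX : AEStronglyMeasurable X P) : AEStronglyMeasurable (pseudoGradWeight X K h x) P :=
  ((continuous_deriv_Kh (hH1.contDiff.of_le (by norm_num))).comp
    (continuous_pow 2)).comp_aestronglyMeasurable (hX.sub aestronglyMeasurable_const).norm

lemma integrable_pseudoGradWeight [IsFiniteMeasure P] (hH1 : AssumpH1 K h K0 K1 K2 K3)
    (hX : AEStronglyMeasurable X P) : Integrable (pseudoGradWeight X K h x) P :=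
  .of_bound (aestronglyMeasurable_pseudoGradWeight hH1 hX) K2
    (.of_forall (abs_pseudoGradWeight_le hH1))

lemma integrable_pseudoGradWeight_smul {Y : Ω → L2} (hH1 : AssumpH1 K h K0 K1 K2 K3)
    (hX : AEStronglyMeasurable X P) (hYmeas : AEStronglyMeasurable Y P)
    (hY : Integrable (fun ω => ‖Y ω‖) P) :
    Integrable (fun ω => pseudoGradWeight X K h x ω • Y ω) P :=
  ((integrable_norm_iff hYmeas).1 hY).bdd_smul K2 (aestronglyMeasurable_pseudoGradWeight hH1 hX)
    (.of_forall (abs_pseudoGradWeight_le hH1))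

lemma integral_pseudoGradWeight_neg [IsFiniteMeasure P] (hh : 0 < h)
    (hH1 : AssumpH1 K h K0 K1 K2 K3) (hH2 : AssumpH2 K) (hX : AEStronglyMeasurable X P)
    (hdens : 0 < pseudoDensity P X K h x) : ∫ ω, pseudoGradWeight X K h x ω ∂P < 0 := by
  have hKint : Integrable (fun ω => Kh K h (‖X ω - x‖ ^ 2)) P :=
    .of_integral_ne_zero hdens.ne'
  calc ∫ ω, pseudoGradWeight X K h x ω ∂P
      ≤ ∫ ω, -(Kh K h (‖X ω - x‖ ^ 2) / h) ∂P :=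
        integral_mono (integrable_pseudoGradWeight hH1 hX) (hKint.div_const h).neg
          (pseudoGradWeight_le hh hH1 hH2)
    _ = -(pseudoDensity P X K h x / h) := by rw [integral_neg, integral_div]; rfl
    _ < 0 := neg_neg_of_pos (div_pos hdens hh)

lemma isWeakDeriv_weightedMean_of_pseudoGrad_eq_zero [IsFiniteMeasure P] {X' : Ω → L2}
    (hh : 0 < h) (hH1 : AssumpH1 K h K0 K1 K2 K3) (hH2 : AssumpH2 K)
    (hXmeas : AEStronglyMeasurable X P) (hX'meas : AEStronglyMeasurable X' P)
    (hXH10 : ∀ᵐ ω ∂P, IsWeakDeriv (X' ω) (X ω))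
    (hXint : Integrable (fun ω => ‖X ω‖) P) (hX'int : Integrable (fun ω => ‖X' ω‖) P)
    (hgrad : pseudoGrad P X K h x = 0) (hdens : 0 < pseudoDensity P X K h x) :
    IsWeakDeriv (weightedMean P (pseudoGradWeight X K h x) X') x := by
  rw [L2.isWeakDeriv_iff_eq_volterra, ← weightedMean_eq_map_weightedMean L2.volterra
    (hXH10.mono fun _ => L2.isWeakDeriv_iff_eq_volterra.1)
    (integrable_pseudoGradWeight_smul hH1 hXmeas hX'meas hX'int)]
  exact eq_weightedMean_of_integral_smul_sub_eq_zero (integrable_pseudoGradWeight hH1 hXmeas)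
    (integrable_pseudoGradWeight_smul hH1 hXmeas hXmeas hXint)
    (integral_pseudoGradWeight_neg hh hH1 hH2 hXmeas hdens).ne
    ((smul_eq_zero.1 hgrad).resolve_left two_ne_zero)

end CriticalPoint

theorem statement8_general
    {Ω : Type*} [MeasurableSpace Ω] (P : Measure Ω) [IsProbabilityMeasure P]
    (X X' : Ω → L2) (K : ℝ → ℝ) (h K0 K1 K2 K3 : ℝ) (hh : 0 < h)
    (hH1 : AssumpH1 K h K0 K1 K2 K3)
    (hH2 : AssumpH2 K)
    (hXmeas : AEStronglyMeasurable X P) (hX'meas : AEStronglyMeasurable X' P)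
    (hXH10 : ∀ᵐ ω ∂P, IsWeakDeriv (X' ω) (X ω))
    (hXint : Integrable (fun ω => ‖X ω‖) P) (hX'int : Integrable (fun ω => ‖X' ω‖) P) :
    (∀ x : L2, pseudoGrad P X K h x = 0 → 0 < pseudoDensity P X K h x →
      ∃ x' : L2, IsWeakDeriv x' x) ∧
    (∀ M : ℝ, 0 < M → (∀ᵐ ω ∂P, ‖X' ω‖ ≤ M) →
      ∀ x : L2, pseudoGrad P X K h x = 0 → 0 < pseudoDensity P X K h x →
        ∃ x' : L2, IsWeakDeriv x' x ∧ ‖x'‖ ≤ M) := by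
  have hcrit : ∀ x : L2, pseudoGrad P X K h x = 0 → 0 < pseudoDensity P X K h x →
      IsWeakDeriv (weightedMean P (pseudoGradWeight X K h x) X') x := fun _ =>
    isWeakDeriv_weightedMean_of_pseudoGrad_eq_zero hh hH1 hH2 hXmeas hX'meas hXH10 hXint hX'int
  refine ⟨fun x hgrad hdens => ⟨_, hcrit x hgrad hdens⟩, fun M hM hX'M x hgrad hdens =>
    ⟨_, hcrit x hgrad hdens, norm_weightedMean_le (integrable_pseudoGradWeight hH1 hXmeas)
      (.of_forall (pseudoGradWeight_nonpos hh hH1 hH2)) hX'M hM.le⟩⟩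

/-- Under (H1), (H2), (H3): every nontrivial critical point of `p_h`
(`Dp_h(x) = 0` and `p_h(x) > 0`) belongs to `H¹₀`; and if moreover `‖X‖_{H¹₀} ≤ M` a.s.
for some `M > 0`, then every nontrivial critical point `x` satisfies `‖x‖_{H¹₀} ≤ M`. -/
theorem statement8
    {Ω : Type*} [MeasurableSpace Ω] (P : Measure Ω) [IsProbabilityMeasure P]
    (X X' : Ω → L2) (K : ℝ → ℝ) (h K0 K1 K2 K3 M1 N1 : ℝ) (hh : 0 < h)
    (hH1 : AssumpH1 K h K0 K1 K2 K3)
    (hH2 : AssumpH2 K)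
    (hXmeas : AEStronglyMeasurable X P) (hX'meas : AEStronglyMeasurable X' P)
    (hXH10 : ∀ᵐ ω ∂P, IsWeakDeriv (X' ω) (X ω))
    (hXint : Integrable (fun ω => ‖X ω‖) P) (hX'int : Integrable (fun ω => ‖X' ω‖) P)
    (hM1 : (∫ ω, ‖X ω‖ ∂P) ≤ M1) (hN1 : (∫ ω, ‖X' ω‖ ∂P) ≤ N1) :
    (∀ x : L2, pseudoGrad P X K h x = 0 → 0 < pseudoDensity P X K h x →
      ∃ x' : L2, IsWeakDeriv x' x) ∧
    (∀ M : ℝ, 0 < M → (∀ᵐ ω ∂P, ‖X' ω‖ ≤ M) →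
      ∀ x : L2, pseudoGrad P X K h x = 0 → 0 < pseudoDensity P X K h x →
        ∃ x' : L2, IsWeakDeriv x' x ∧ ‖x'‖ ≤ M) :=
  statement8_general P X X' K h K0 K1 K2 K3 hh hH1 hH2 hXmeas hX'meas hXH10 hXint hX'int

end
end

section
/- Let f₁, f₂ : L² → ℝ be three times continuously Fréchet differentiable with sup_{x∈L²}‖D^k f_i(x)‖ ≤ β_k < ∞ for k = 0,1,2,3 and i = 1,2, and let M > 0. Set η_l = sup_{x ∈ B_{H¹₀}(0,M)} ‖D^l f₁(x) − D^l f₂(x)‖ for l = 0,1,2 (appropriate operator norms). Assume (C1): all nontrivial critical points of f₁ and f₂ lie in H¹₀; and (C2): for every initial value in H¹₀ the initial value problem π'(t) = Df_i(π(t)) has a global H¹₀-valued solution whose trajectory admits an L²-convergent subsequence. Let x₂* be a nondegenerate local maximum of f₂ with ‖x₂*‖_{H¹₀} < M and put δ = −sup_{‖u‖_{L²}=1} D²f₂(x₂*)(u,u) > 0. If η₁ ≤ δ²/(8β₃) and η₂ ≤ δ/8, then there exists x₁* in the L² ball B_{L²}(x₂*, δ/(2β₃)) such that: (1) x₁* is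 the unique local maximum of f₁ in B_{L²}(x₂*, δ/(2β₃)); (2) sup_{‖u‖_{L²}=1} D²f₁(x₁*)(u,u) ≤ −3δ/8; (3) ‖x₁* − x₂*‖_{L²} ≤ 8η₁/δ. -/
open MeasureTheory ProbabilityTheory Real Set Filter
open scoped InnerProductSpace ENNReal NNReal Topology

noncomputable section

/-!
Near `x₂*` the Hessian of `f₁` stays uniformly negative: `D²f₂(x₂*) ≤ -δ`, `D²f₁(x₂*)` differs
from it by at most `η₂ ≤ δ/8`, and `D²f₁` moves by at most `β₃ r = δ/2` on the ball of radius
`r = δ/(2β₃)`, so `D²f₁ ≤ -3δ/8` on that ball. Hence `-Df₁` is `3δ/8`-strongly monotone there: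
`f₁` is concave on the ball, has at most one critical point in it, and any critical point is its
maximum. Since `‖Df₁(x₂*)‖ ≤ η₁` is small, a damped gradient step `x ↦ x + t Df₁(x)` maps the
ball into itself and contracts, and its fixed point is `x₁*`; strong monotonicity then gives
`(3δ/8) ‖x₁* - x₂*‖ ≤ ‖Df₁(x₂*)‖ ≤ η₁`. That `δ > 0` at all comes from nondegeneracy: by
Cauchy–Schwarz for the form `-⟪T ·, ·⟫`, a self-adjoint, negative semidefinite isomorphism `T`
satisfies `‖T u‖² ≤ ‖T‖ ⟪-T u, u⟫`, and `‖T u‖` is bounded below.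
-/

open Metric

section

variable {E : Type*} [NormedAddCommGroup E] [InnerProductSpace ℝ E]

def StronglyDissipativeOn (G : E → E) (m : ℝ) (s : Set E) : Prop :=
  ∀ x ∈ s, ∀ y ∈ s, ⟪G x - G y, x - y⟫_ℝ ≤ -m * ‖x - y‖ ^ 2

theorem StronglyDissipativeOn.of_hasFDerivAt {G : E → E} {D : E → E →L[ℝ] E} {m : ℝ}
    {s : Set E} (hs : Convex ℝ s) (hD : ∀ x ∈ s, HasFDerivAt G (D x) x)
    (hneg : ∀ x ∈ s, ∀ v, ⟪D x v, v⟫_ℝ ≤ -m * ‖v‖ ^ 2) : StronglyDissipativeOn G m s := by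
  intro x hx y hy
  obtain ⟨z, hz, hmvt⟩ := domain_mvt (f := fun w => ⟪x - y, G w⟫_ℝ)
    (fun w hw => ((innerSL ℝ (x - y)).hasFDerivAt.comp w (hD w hw)).hasFDerivWithinAt)
    hs hy hx
  have hzs : z ∈ s := hs.segment_subset hy hx hz
  simp only [ContinuousLinearMap.comp_apply, innerSL_apply_apply] at hmvt
  rw [real_inner_comm, inner_sub_right, hmvt, real_inner_comm]
  exact hneg z hzs _

theorem StronglyDissipativeOn.mul_norm_sub_le {G : E → E} {m : ℝ} {s : Set E}
    (h : StronglyDissipativeOn G m s) {x y : E} (hx : x ∈ s) (hy : y ∈ s) (hGx : G x = 0) :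
    m * ‖x - y‖ ≤ ‖G y‖ := by
  have hdiss := h x hx y hy
  rw [hGx, zero_sub, inner_neg_left] at hdiss
  have hcs := real_inner_le_norm (G y) (x - y)
  rcases (norm_nonneg (x - y)).eq_or_lt with hxy | hxy
  · rw [← hxy, mul_zero]; exact norm_nonneg _
  · nlinarith

theorem StronglyDissipativeOn.eq_of_apply_eq_zero {G : E → E} {m : ℝ} {s : Set E}
    (h : StronglyDissipativeOn G m s) (hm : 0 < m) {x y : E} (hx : x ∈ s) (hy : y ∈ s)
    (hGx : G x = 0) (hGy : G y = 0) : x = y := by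
  have hxy := h.mul_norm_sub_le hx hy hGx
  rw [hGy, norm_zero] at hxy
  rw [← sub_eq_zero, ← norm_le_zero_iff]
  exact nonpos_of_mul_nonpos_right hxy hm

theorem StronglyDissipativeOn.isMaxOn [CompleteSpace E] {f : E → ℝ} {G : E → E} {m : ℝ}
    {s : Set E} (h : StronglyDissipativeOn G m s) (hm : 0 ≤ m) (hs : Convex ℝ s)
    (hG : ∀ x ∈ s, HasGradientAt f (G x) x) {x₀ : E} (hx₀ : x₀ ∈ s) (hGx₀ : G x₀ = 0) :
    IsMaxOn f s x₀ := by
  intro x hx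
  obtain ⟨z, hz, hmvt⟩ := domain_mvt (fun w hw => (hG w hw).hasFDerivAt.hasFDerivWithinAt)
    hs hx₀ hx
  have hdiss := h z (hs.segment_subset hx₀ hx hz) x₀ hx₀
  rw [segment_eq_image'] at hz
  obtain ⟨θ, ⟨hθ, -⟩, rfl⟩ := hz
  dsimp only at hmvt hdiss
  rw [InnerProductSpace.toDual_apply_apply] at hmvt
  rw [hGx₀, sub_zero, add_sub_cancel_left, real_inner_smul_right] at hdiss
  show f x ≤ f x₀
  rcases hθ.eq_or_lt with rfl | hθ
  · rw [zero_smul, add_zero, hGx₀, inner_zero_left, sub_eq_zero] at hmvt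
    exact hmvt.le
  · have : ⟪G (x₀ + θ • (x - x₀)), x - x₀⟫_ℝ ≤ 0 := by
      nlinarith [mul_nonneg hm (sq_nonneg ‖θ • (x - x₀)‖)]
    linarith

theorem StronglyDissipativeOn.norm_add_smul_sub_sq_le {G : E → E} {m L t : ℝ} {s : Set E}
    (h : StronglyDissipativeOn G m s)
    (hLip : ∀ x ∈ s, ∀ y ∈ s, ‖G x - G y‖ ≤ L * ‖x - y‖) (ht : 0 ≤ t)
    {x y : E} (hx : x ∈ s) (hy : y ∈ s) :
    ‖(x + t • G x) - (y + t • G y)‖ ^ 2 ≤ (1 - 2 * t * m + t ^ 2 * L ^ 2) * ‖x - y‖ ^ 2 := by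
  have hdiss := h x hx y hy
  have hLxy : ‖t • (G x - G y)‖ ^ 2 ≤ (t * L * ‖x - y‖) ^ 2 := by
    rw [norm_smul, Real.norm_of_nonneg ht, mul_assoc]
    gcongr
    exact hLip x hx y hy
  rw [add_sub_add_comm, ← smul_sub, norm_add_sq_real, real_inner_smul_right, real_inner_comm]
  nlinarith [mul_le_mul_of_nonneg_left hdiss ht]

theorem StronglyDissipativeOn.exists_zero [CompleteSpace E] {G : E → E} {m L r : ℝ} {x₀ : E}
    (h : StronglyDissipativeOn G m (closedBall x₀ r)) (hm : 0 < m) (hmL : m ≤ L)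
    (hLip : ∀ x ∈ closedBall x₀ r, ∀ y ∈ closedBall x₀ r, ‖G x - G y‖ ≤ L * ‖x - y‖)
    (hx₀ : ‖G x₀‖ ≤ 3 / 4 * m * r) : ∃ x ∈ closedBall x₀ r, G x = 0 := by
  have hL : 0 < L := hm.trans_le hmL
  have hr : 0 ≤ r := by
    by_contra! hr
    nlinarith [norm_nonneg (G x₀)]
  set t := m / (2 * L ^ 2) with ht
  set q := 1 - 3 * m ^ 2 / (8 * L ^ 2) with hq
  have ht0 : 0 < t := by positivity
  have hq0 : 0 ≤ q := by
    rw [hq, sub_nonneg, div_le_one (by positivity)]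
    nlinarith
  have hq1 : q < 1 := by rw [hq]; linarith [show 0 < 3 * m ^ 2 / (8 * L ^ 2) by positivity]
  -- for this step size `1 - 2tm + t²L² = 1 - 3m²/(4L²) ≤ q²`, and `t · (3/4) m r = (1 - q) r`
  have hcontr : ∀ x ∈ closedBall x₀ r, ∀ y ∈ closedBall x₀ r,
      ‖(x + t • G x) - (y + t • G y)‖ ≤ q * ‖x - y‖ := by
    intro x hx y hy
    refine le_of_sq_le_sq ?_ (by positivity)
    calc ‖(x + t • G x) - (y + t • G y)‖ ^ 2
        ≤ (1 - 2 * t * m + t ^ 2 * L ^ 2) * ‖x - y‖ ^ 2 :=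
          h.norm_add_smul_sub_sq_le hLip ht0.le hx hy
      _ ≤ (q * ‖x - y‖) ^ 2 := by
          rw [mul_pow]
          gcongr
          rw [ht, hq]
          field_simp
          nlinarith [sq_nonneg m, sq_nonneg L]
  have hmaps : MapsTo (fun x => x + t • G x) (closedBall x₀ r) (closedBall x₀ r) := by
    intro x hx
    have hx₀r := mem_closedBall_self (x := x₀) hr
    rw [mem_closedBall, dist_eq_norm] at hx ⊢
    calc ‖x + t • G x - x₀‖ = ‖(x + t • G x) - (x₀ + t • G x₀) + t • G x₀‖ := by abel_nf
      _ ≤ q * ‖x - x₀‖ + t * ‖G x₀‖ := by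
          grw [norm_add_le, hcontr x (by rwa [mem_closedBall, dist_eq_norm]) x₀ hx₀r,
            norm_smul, Real.norm_of_nonneg ht0.le]
      _ ≤ q * r + t * (3 / 4 * m * r) := by gcongr
      _ = r := by rw [ht, hq]; field_simp; ring
  obtain ⟨x, hx, hfix, -⟩ := ContractingWith.exists_fixedPoint' isClosed_closedBall.isComplete
    hmaps (K := ⟨q, hq0⟩) ⟨hq1, LipschitzWith.of_dist_le_mul fun x y => by
      simp only [Subtype.dist_eq, dist_eq_norm, MapsTo.val_restrict_apply]
      exact hcontr x x.2 y y.2⟩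
    (mem_closedBall_self hr) (edist_ne_top _ _)
  refine ⟨x, hx, ?_⟩
  simpa [Function.IsFixedPt, ht0.ne'] using hfix

theorem norm_apply_sq_le_mul_neg_inner {T : E →L[ℝ] E}
    (hsym : ∀ v w, ⟪T v, w⟫_ℝ = ⟪v, T w⟫_ℝ) (hneg : ∀ v, ⟪T v, v⟫_ℝ ≤ 0) (u : E) :
    ‖T u‖ ^ 2 ≤ ‖T‖ * -⟪T u, u⟫_ℝ := by
  let B : LinearMap.BilinForm ℝ E := (innerₗ E).comp (-T : E →L[ℝ] E).toLinearMap
  have hB : ∀ v w, B v w = -⟪T v, w⟫_ℝ := fun v w => by simp [B]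
  -- Cauchy–Schwarz for the positive semidefinite form `-⟪T ·, ·⟫` at `(u, T u)`
  have hcs := B.apply_mul_apply_le_of_forall_zero_le (fun v => by simp [hB, hneg]) u (T u)
  rw [hB, hB, hB, hB, hsym (T u), real_inner_self_eq_norm_sq] at hcs
  have hTTu : -⟪T (T u), T u⟫_ℝ ≤ ‖T‖ * ‖T u‖ ^ 2 := by
    rw [sq, ← mul_assoc]
    exact (neg_le_abs _).trans <| (abs_real_inner_le_norm _ _).trans <|
      mul_le_mul_of_nonneg_right (T.le_opNorm _) (norm_nonneg _)
  have hBu : 0 ≤ -⟪T u, u⟫_ℝ := neg_nonneg.mpr (hneg u)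
  rcases (sq_nonneg ‖T u‖).eq_or_lt with h0 | hpos
  · rw [← h0]; positivity
  · refine le_of_mul_le_mul_right ?_ hpos
    nlinarith [mul_le_mul_of_nonneg_left hTTu hBu]

theorem exists_pos_inner_apply_self_le_neg_mul {T : E →L[ℝ] E} {K : ℝ≥0}
    (hT : AntilipschitzWith K T) (hsym : ∀ v w, ⟪T v, w⟫_ℝ = ⟪v, T w⟫_ℝ)
    (hneg : ∀ v, ⟪T v, v⟫_ℝ ≤ 0) : ∃ ε > 0, ∀ v, ⟪T v, v⟫_ℝ ≤ -ε * ‖v‖ ^ 2 := by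
  refine ⟨1 / (K ^ 2 * ‖T‖ + 1), by positivity, fun v => ?_⟩
  have hTv := norm_apply_sq_le_mul_neg_inner hsym hneg v
  have hv : ‖v‖ ^ 2 ≤ (K ^ 2 * ‖T‖ + 1) * -⟪T v, v⟫_ℝ := calc
    ‖v‖ ^ 2 ≤ (K * ‖T v‖) ^ 2 := by gcongr; exact T.bound_of_antilipschitz hT v
    _ = K ^ 2 * ‖T v‖ ^ 2 := by ring
    _ ≤ K ^ 2 * (‖T‖ * -⟪T v, v⟫_ℝ) := by gcongr
    _ ≤ (K ^ 2 * ‖T‖ + 1) * -⟪T v, v⟫_ℝ := by nlinarith [hneg v]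
  rw [neg_mul, le_neg, one_div_mul_eq_div, div_le_iff₀ (by positivity)]
  linarith

theorem inner_apply_self_le_iSup_mul_norm_sq (T : E →L[ℝ] E) (v : E) :
    ⟪T v, v⟫_ℝ ≤ (⨆ u : {u : E // ‖u‖ = 1}, ⟪T u.1, u.1⟫_ℝ) * ‖v‖ ^ 2 := by
  rcases eq_or_ne v 0 with rfl | hv
  · simp
  have hbdd : BddAbove (range fun u : {u : E // ‖u‖ = 1} => ⟪T u.1, u.1⟫_ℝ) := by
    refine ⟨‖T‖, ?_⟩
    rintro _ ⟨u, rfl⟩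
    simpa [u.2] using (real_inner_le_norm (T u.1) u.1).trans
      (mul_le_mul_of_nonneg_right (T.le_opNorm u.1) (norm_nonneg _))
  have hsup := le_ciSup hbdd ⟨‖v‖⁻¹ • v, norm_smul_inv_norm hv⟩
  simp only [map_smul, real_inner_smul_left, real_inner_smul_right] at hsup
  have hv' : 0 < ‖v‖ := norm_pos_iff.mpr hv
  calc ⟪T v, v⟫_ℝ = ‖v‖⁻¹ * (‖v‖⁻¹ * ⟪T v, v⟫_ℝ) * ‖v‖ ^ 2 := by field_simp
    _ ≤ _ := by gcongr

theorem iSup_inner_apply_self_le [Nontrivial E] {T : E →L[ℝ] E} {c : ℝ}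
    (h : ∀ v, ⟪T v, v⟫_ℝ ≤ c * ‖v‖ ^ 2) :
    (⨆ u : {u : E // ‖u‖ = 1}, ⟪T u.1, u.1⟫_ℝ) ≤ c := by
  obtain ⟨u, hu⟩ := exists_norm_eq E zero_le_one
  have : Nonempty {u : E // ‖u‖ = 1} := ⟨⟨u, hu⟩⟩
  exact ciSup_le fun u => by simpa [u.2] using h u.1

theorem le_opNorm_of_inner_apply_self_le [Nontrivial E] {T : E →L[ℝ] E} {m : ℝ}
    (h : ∀ v, ⟪T v, v⟫_ℝ ≤ -m * ‖v‖ ^ 2) : m ≤ ‖T‖ := by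
  obtain ⟨u, hu⟩ := exists_norm_eq E zero_le_one
  have hu' := h u
  have hle := (abs_real_inner_le_norm (T u) u).trans
    (mul_le_mul_of_nonneg_right (T.le_opNorm u) (norm_nonneg _))
  rw [hu] at hu' hle
  linarith [neg_abs_le ⟪T u, u⟫_ℝ]

theorem inner_apply_self_le_of_norm_sub_le {A B : E →L[ℝ] E} {a b : ℝ}
    (hA : ∀ v, ⟪A v, v⟫_ℝ ≤ -a * ‖v‖ ^ 2) (hAB : ‖B - A‖ ≤ b) (v : E) :
    ⟪B v, v⟫_ℝ ≤ -(a - b) * ‖v‖ ^ 2 := by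
  have hBA : ⟪(B - A) v, v⟫_ℝ ≤ b * ‖v‖ ^ 2 := calc
    _ ≤ ‖(B - A) v‖ * ‖v‖ := real_inner_le_norm _ _
    _ ≤ ‖B - A‖ * ‖v‖ * ‖v‖ := by gcongr; exact (B - A).le_opNorm v
    _ ≤ b * ‖v‖ * ‖v‖ := by gcongr
    _ = b * ‖v‖ ^ 2 := by ring
  rw [sub_apply, inner_sub_left] at hBA
  linarith [hA v]

theorem inner_apply_self_le_of_mem_closedBall {D : E → E →L[ℝ] E} {A : E →L[ℝ] E}
    {x₀ x : E} {δ β : ℝ} (hβ : 0 < β) (hD : ∀ x y, ‖D x - D y‖ ≤ β * ‖x - y‖)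
    (hA : ∀ v, ⟪A v, v⟫_ℝ ≤ -δ * ‖v‖ ^ 2) (hDA : ‖D x₀ - A‖ ≤ δ / 8)
    (hx : x ∈ closedBall x₀ (δ / (2 * β))) (v : E) :
    ⟪D x v, v⟫_ℝ ≤ -(3 * δ / 8) * ‖v‖ ^ 2 := by
  rw [mem_closedBall, dist_eq_norm] at hx
  have hDxA : ‖D x - A‖ ≤ 5 * δ / 8 := calc
    ‖D x - A‖ ≤ ‖D x - D x₀‖ + ‖D x₀ - A‖ := norm_sub_le_norm_sub_add_norm_sub _ _ _
    _ ≤ β * (δ / (2 * β)) + δ / 8 := by grw [hD, hx, hDA]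
    _ = 5 * δ / 8 := by field_simp; ring
  convert inner_apply_self_le_of_norm_sub_le hA hDxA v using 2
  ring

theorem neg_iSup_inner_apply_self_pos [Nontrivial E] {T : E →L[ℝ] E}
    (hsym : ∀ v w, ⟪T v, w⟫_ℝ = ⟪v, T w⟫_ℝ) (hneg : ∀ v, v ≠ 0 → ⟪T v, v⟫_ℝ < 0)
    (hiso : ∃ T' : E ≃L[ℝ] E, (T' : E →L[ℝ] E) = T) :
    0 < -(⨆ u : {u : E // ‖u‖ = 1}, ⟪T u.1, u.1⟫_ℝ) := by
  obtain ⟨T', rfl⟩ := hiso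
  have hneg' : ∀ v, ⟪T' v, v⟫_ℝ ≤ 0 := fun v => by
    rcases eq_or_ne v 0 with rfl | hv
    · simp
    · exact (hneg v hv).le
  obtain ⟨ε, hε, hcoer⟩ := exists_pos_inner_apply_self_le_neg_mul T'.antilipschitz hsym hneg'
  linarith [iSup_inner_apply_self_le hcoer]

theorem exists_zero_isMaxOn_closedBall_of_hessian_near [CompleteSpace E] [Nontrivial E]
    {f : E → ℝ} {G : E → E} {D : E → E →L[ℝ] E} {D' : E → E →L[ℝ] E →L[ℝ] E}
    {A : E →L[ℝ] E} {x₀ : E} {L β δ : ℝ} (hβ : 0 < β) (hδ : 0 < δ)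
    (hG : ∀ x, HasGradientAt f (G x) x) (hD : ∀ x, HasFDerivAt G (D x) x)
    (hD' : ∀ x, HasFDerivAt D (D' x) x) (hDL : ∀ x, ‖D x‖ ≤ L) (hD'β : ∀ x, ‖D' x‖ ≤ β)
    (hA : ∀ v, ⟪A v, v⟫_ℝ ≤ -δ * ‖v‖ ^ 2) (hDA : ‖D x₀ - A‖ ≤ δ / 8)
    (hGx₀ : ‖G x₀‖ ≤ δ ^ 2 / (8 * β)) :
    ∃ x₁ ∈ ball x₀ (δ / (2 * β)), G x₁ = 0 ∧ IsMaxOn f (closedBall x₀ (δ / (2 * β))) x₁ ∧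
      (∀ y ∈ closedBall x₀ (δ / (2 * β)), G y = 0 → y = x₁) ∧
      (∀ v, ⟪D x₁ v, v⟫_ℝ ≤ -(3 * δ / 8) * ‖v‖ ^ 2) ∧ 3 * δ / 8 * ‖x₁ - x₀‖ ≤ ‖G x₀‖ := by
  set r := δ / (2 * β) with hr
  have hGlip : ∀ x y, ‖G x - G y‖ ≤ L * ‖x - y‖ := fun x y =>
    convex_univ.norm_image_sub_le_of_norm_hasFDerivWithin_le
      (fun z _ => (hD z).hasFDerivWithinAt) (fun z _ => hDL z) (mem_univ y) (mem_univ x)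
  have hDlip : ∀ x y, ‖D x - D y‖ ≤ β * ‖x - y‖ := fun x y =>
    convex_univ.norm_image_sub_le_of_norm_hasFDerivWithin_le
      (fun z _ => (hD' z).hasFDerivWithinAt) (fun z _ => hD'β z) (mem_univ y) (mem_univ x)
  have hDneg : ∀ x ∈ closedBall x₀ r, ∀ v, ⟪D x v, v⟫_ℝ ≤ -(3 * δ / 8) * ‖v‖ ^ 2 :=
    fun x hx => inner_apply_self_le_of_mem_closedBall hβ hDlip hA hDA hx
  have hdiss : StronglyDissipativeOn G (3 * δ / 8) (closedBall x₀ r) :=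
    .of_hasFDerivAt (convex_closedBall _ _) (fun x _ => hD x) hDneg
  have hx₀r : x₀ ∈ closedBall x₀ r := mem_closedBall_self (by positivity)
  obtain ⟨x₁, hx₁r, hx₁⟩ := hdiss.exists_zero (by positivity)
    ((le_opNorm_of_inner_apply_self_le (hDneg x₀ hx₀r)).trans (hDL x₀))
    (fun x _ y _ => hGlip x y) (by
      grw [hGx₀, hr]
      field_simp
      nlinarith [sq_nonneg δ])
  have hdist : 3 * δ / 8 * ‖x₁ - x₀‖ ≤ ‖G x₀‖ := hdiss.mul_norm_sub_le hx₁r hx₀r hx₁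
  have hx₁ball : x₁ ∈ ball x₀ r := by
    have hGx₀' : ‖G x₀‖ * (8 * β) ≤ δ ^ 2 := (le_div_iff₀ (by positivity)).mp hGx₀
    rw [mem_ball, dist_eq_norm, hr, lt_div_iff₀ (by positivity)]
    nlinarith [norm_nonneg (x₁ - x₀)]
  exact ⟨x₁, hx₁ball, hx₁,
    hdiss.isMaxOn (by positivity) (convex_closedBall _ _) (fun x _ => hG x) hx₁r hx₁,
    fun y hy hGy => hdiss.eq_of_apply_eq_zero (by positivity) hy hx₁r hGy hx₁,
    hDneg x₁ hx₁r, hdist⟩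

end

instance : Nontrivial L2 := by
  have : IsFiniteMeasure μ01 := by unfold μ01; infer_instance
  refine nontrivial_of_ne (Lp.const 2 μ01 (1 : ℝ)) 0 fun h => ?_
  have hnorm := congrArg norm h
  rw [Lp.norm_const' _ _ _ two_ne_zero ENNReal.ofNat_ne_top, norm_zero, μ01,
    measureReal_restrict_apply_univ] at hnorm
  simp at hnorm

theorem statement14_general
    (f₁ f₂ : L2 → ℝ) (G₁ G₂ : L2 → L2) (D₁ D₂ : L2 → (L2 →L[ℝ] L2))
    (D₁₃ D₂₃ : L2 → (L2 →L[ℝ] (L2 →L[ℝ] L2)))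
    (β₂ β₃ M η₀ η₁ η₂ : ℝ) (hβ₃ : 0 < β₃)
    (hG₁ : ∀ x : L2, HasGradientAt f₁ (G₁ x) x)
    (hD₁ : ∀ x : L2, HasFDerivAt G₁ (D₁ x) x)
    (hD₁₃ : ∀ x : L2, HasFDerivAt D₁ (D₁₃ x) x)
    -- uniform bounds β₀,…,β₃ on the derivatives of f₁ and f₂:
    (hβ₂ : ∀ x : L2, ‖D₁ x‖ ≤ β₂ ∧ ‖D₂ x‖ ≤ β₂)
    (hβ₃b : ∀ x : L2, ‖D₁₃ x‖ ≤ β₃ ∧ ‖D₂₃ x‖ ≤ β₃)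
    -- η_l bounds the discrepancy of the l-th derivatives on the H¹₀ ball of radius M:
    (hη : ∀ x x' : L2, IsWeakDeriv x' x → ‖x'‖ ≤ M →
      |f₁ x - f₂ x| ≤ η₀ ∧ ‖G₁ x - G₂ x‖ ≤ η₁ ∧ ‖D₁ x - D₂ x‖ ≤ η₂)
    -- x₂* is a nondegenerate local maximum of f₂ with ‖x₂*‖_{H¹₀} < M:
    (x₂ x₂' : L2) (hx₂ : IsWeakDeriv x₂' x₂) (hx₂M : ‖x₂'‖ < M)
    (hx₂crit : G₂ x₂ = 0)
    (hx₂sym : ∀ v w : L2, ⟪D₂ x₂ v, w⟫_ℝ = ⟪v, D₂ x₂ w⟫_ℝ)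
    (hx₂negdef : ∀ v : L2, v ≠ 0 → ⟪D₂ x₂ v, v⟫_ℝ < 0)
    (hx₂iso : ∃ T : L2 ≃L[ℝ] L2, (T : L2 →L[ℝ] L2) = D₂ x₂)
    -- δ = −sup_{‖u‖=1} D²f₂(x₂*)(u,u):
    (δ : ℝ) (hδdef : δ = -(⨆ u : {u : L2 // ‖u‖ = 1}, ⟪D₂ x₂ u.1, u.1⟫_ℝ))
    (hη₁ : η₁ ≤ δ ^ 2 / (8 * β₃)) (hη₂ : η₂ ≤ δ / 8) :
    ∃ x₁ : L2, x₁ ∈ Metric.ball x₂ (δ / (2 * β₃)) ∧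
      G₁ x₁ = 0 ∧ IsLocalMax f₁ x₁ ∧
      (∀ y : L2, y ∈ Metric.ball x₂ (δ / (2 * β₃)) → G₁ y = 0 → IsLocalMax f₁ y → y = x₁) ∧
      (∀ u : L2, ‖u‖ = 1 → ⟪D₁ x₁ u, u⟫_ℝ ≤ -(3 * δ / 8)) ∧
      ‖x₁ - x₂‖ ≤ 8 * η₁ / δ := by
  obtain ⟨-, hGx₂, hDx₂⟩ := hη x₂ x₂' hx₂ hx₂M.le
  rw [hx₂crit, sub_zero] at hGx₂
  have hδ : 0 < δ := hδdef ▸ neg_iSup_inner_apply_self_pos hx₂sym hx₂negdef hx₂iso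
  have hD₂x₂ : ∀ v, ⟪D₂ x₂ v, v⟫_ℝ ≤ -δ * ‖v‖ ^ 2 := fun v => by
    simpa [hδdef] using inner_apply_self_le_iSup_mul_norm_sq (D₂ x₂) v
  obtain ⟨x₁, hx₁, hGx₁, hmax, huniq, hD₁x₁, hdist⟩ :=
    exists_zero_isMaxOn_closedBall_of_hessian_near hβ₃ hδ hG₁ hD₁ hD₁₃ (fun x => (hβ₂ x).1)
      (fun x => (hβ₃b x).1) hD₂x₂ (hDx₂.trans hη₂) (hGx₂.trans hη₁)
  refine ⟨x₁, hx₁, hGx₁, hmax.isLocalMax (closedBall_mem_nhds_of_mem hx₁),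
    fun y hy hGy _ => huniq y (ball_subset_closedBall hy) hGy,
    fun u hu => by simpa [hu] using hD₁x₁ u, ?_⟩
  rw [le_div_iff₀ hδ]
  nlinarith [norm_nonneg (x₁ - x₂)]

/-- Lemma 8 of the paper. Let `f₁, f₂ : L² → ℝ` be three times
continuously Fréchet differentiable with uniformly bounded derivatives up to order 3
(bounds `β₀,…,β₃`), satisfying (C1) and (C2). Let `x₂*` be a nondegenerate local maximum
of `f₂` with `‖x₂*‖_{H¹₀} < M`, let `δ = −sup_{‖u‖=1} D²f₂(x₂*)(u,u) > 0`, and suppose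
`η₁ ≤ δ²/(8β₃)`, `η₂ ≤ δ/8` where `η_l` bounds the discrepancy of the `l`-th derivatives
on the `H¹₀` ball of radius `M`. Then there is `x₁*` in the `L²` ball
`B(x₂*, δ/(2β₃))` which is the unique local maximum of `f₁` there, with
`sup_{‖u‖=1} D²f₁(x₁*)(u,u) ≤ −3δ/8` and `‖x₁* − x₂*‖_{L²} ≤ 8η₁/δ`. -/
theorem statement14
    (f₁ f₂ : L2 → ℝ) (G₁ G₂ : L2 → L2) (D₁ D₂ : L2 → (L2 →L[ℝ] L2))
    (D₁₃ D₂₃ : L2 → (L2 →L[ℝ] (L2 →L[ℝ] L2)))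
    (β₀ β₁ β₂ β₃ M η₀ η₁ η₂ : ℝ) (hM : 0 < M) (hβ₃ : 0 < β₃)
    (hf₁ : ContDiff ℝ 3 f₁) (hf₂ : ContDiff ℝ 3 f₂)
    (hG₁ : ∀ x : L2, HasGradientAt f₁ (G₁ x) x)
    (hG₂ : ∀ x : L2, HasGradientAt f₂ (G₂ x) x)
    (hD₁ : ∀ x : L2, HasFDerivAt G₁ (D₁ x) x)
    (hD₂ : ∀ x : L2, HasFDerivAt G₂ (D₂ x) x)
    (hD₁₃ : ∀ x : L2, HasFDerivAt D₁ (D₁₃ x) x)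
    (hD₂₃ : ∀ x : L2, HasFDerivAt D₂ (D₂₃ x) x)
    -- uniform bounds β₀,…,β₃ on the derivatives of f₁ and f₂:
    (hβ₀ : ∀ x : L2, |f₁ x| ≤ β₀ ∧ |f₂ x| ≤ β₀)
    (hβ₁ : ∀ x : L2, ‖G₁ x‖ ≤ β₁ ∧ ‖G₂ x‖ ≤ β₁)
    (hβ₂ : ∀ x : L2, ‖D₁ x‖ ≤ β₂ ∧ ‖D₂ x‖ ≤ β₂)
    (hβ₃b : ∀ x : L2, ‖D₁₃ x‖ ≤ β₃ ∧ ‖D₂₃ x‖ ≤ β₃)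
    -- η_l bounds the discrepancy of the l-th derivatives on the H¹₀ ball of radius M:
    (hη : ∀ x x' : L2, IsWeakDeriv x' x → ‖x'‖ ≤ M →
      |f₁ x - f₂ x| ≤ η₀ ∧ ‖G₁ x - G₂ x‖ ≤ η₁ ∧ ‖D₁ x - D₂ x‖ ≤ η₂)
    -- (C1): nontrivial critical points of f₁ and f₂ are in H¹₀:
    (hC1 : ∀ x : L2, (G₁ x = 0 ∧ 0 < f₁ x) ∨ (G₂ x = 0 ∧ 0 < f₂ x) → MemH10 x)
    -- (C2): the gradient flows have global H¹₀ solutions with L²-convergent subsequences: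
    (hC2 : ∀ x₀ : L2, MemH10 x₀ →
      (∃ γ : ℝ → L2, γ 0 = x₀ ∧ (∀ t : ℝ, 0 ≤ t → MemH10 (γ t)) ∧
        (∀ t : ℝ, 0 ≤ t → HasDerivWithinAt γ (G₁ (γ t)) (Set.Ici 0) t) ∧
        ∃ (y : L2) (tk : ℕ → ℝ), StrictMono tk ∧ (∀ k, 0 ≤ tk k) ∧
          Filter.Tendsto tk Filter.atTop Filter.atTop ∧
          Filter.Tendsto (fun k => γ (tk k)) Filter.atTop (nhds y)) ∧
      (∃ γ : ℝ → L2, γ 0 = x₀ ∧ (∀ t : ℝ, 0 ≤ t → MemH10 (γ t)) ∧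
        (∀ t : ℝ, 0 ≤ t → HasDerivWithinAt γ (G₂ (γ t)) (Set.Ici 0) t) ∧
        ∃ (y : L2) (tk : ℕ → ℝ), StrictMono tk ∧ (∀ k, 0 ≤ tk k) ∧
          Filter.Tendsto tk Filter.atTop Filter.atTop ∧
          Filter.Tendsto (fun k => γ (tk k)) Filter.atTop (nhds y)))
    -- x₂* is a nondegenerate local maximum of f₂ with ‖x₂*‖_{H¹₀} < M:
    (x₂ x₂' : L2) (hx₂ : IsWeakDeriv x₂' x₂) (hx₂M : ‖x₂'‖ < M)
    (hx₂crit : G₂ x₂ = 0) (hx₂max : IsLocalMax f₂ x₂)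
    (hx₂sym : ∀ v w : L2, ⟪D₂ x₂ v, w⟫_ℝ = ⟪v, D₂ x₂ w⟫_ℝ)
    (hx₂negdef : ∀ v : L2, v ≠ 0 → ⟪D₂ x₂ v, v⟫_ℝ < 0)
    (hx₂iso : ∃ T : L2 ≃L[ℝ] L2, (T : L2 →L[ℝ] L2) = D₂ x₂)
    -- δ = −sup_{‖u‖=1} D²f₂(x₂*)(u,u):
    (δ : ℝ) (hδdef : δ = -(⨆ u : {u : L2 // ‖u‖ = 1}, ⟪D₂ x₂ u.1, u.1⟫_ℝ))
    (hη₁ : η₁ ≤ δ ^ 2 / (8 * β₃)) (hη₂ : η₂ ≤ δ / 8) :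
    ∃ x₁ : L2, x₁ ∈ Metric.ball x₂ (δ / (2 * β₃)) ∧
      G₁ x₁ = 0 ∧ IsLocalMax f₁ x₁ ∧
      (∀ y : L2, y ∈ Metric.ball x₂ (δ / (2 * β₃)) → G₁ y = 0 → IsLocalMax f₁ y → y = x₁) ∧
      (∀ u : L2, ‖u‖ = 1 → ⟪D₁ x₁ u, u⟫_ℝ ≤ -(3 * δ / 8)) ∧
      ‖x₁ - x₂‖ ≤ 8 * η₁ / δ :=
  statement14_general f₁ f₂ G₁ G₂ D₁ D₂ D₁₃ D₂₃ β₂ β₃ M η₀ η₁ η₂ hβ₃ hG₁ hD₁ hD₁₃ hβ₂ hβ₃b hη x₂ x₂'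
    hx₂ hx₂M hx₂crit hx₂sym hx₂negdef hx₂iso δ hδdef hη₁ hη₂

end
end

section
/- Let p : L² → [0,∞) be continuous with respect to the L² norm and suppose that p(x) → 0 as ‖x‖_{H¹₀} → ∞, i.e. for every ε > 0 there exists R > 0 such that every x ∈ H¹₀ with ‖x‖_{H¹₀} ≥ R satisfies p(x) ≤ ε. Then p(y) = 0 for every y ∈ H¹₀. -/
/-!
The functions `gₙ(t) = sin (2π (n+1)² t) / (n+1)` lie in `H¹₀`, tend to `0` in `L²`, and have
`‖gₙ'‖_{L²} = √2 π (n+1) → ∞`. For `y ∈ H¹₀` the points `gₙ + y` therefore converge to `y` in `L²`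
while their `H¹₀` norms blow up, so `p (gₙ + y)` tends both to `p y` (continuity) and to `0`.
-/

open MeasureTheory ProbabilityTheory Real Set Filter
open scoped InnerProductSpace ENNReal NNReal Topology

noncomputable section

lemma ae_mem_Icc_μ01 : ∀ᵐ t ∂μ01, t ∈ Icc (0:ℝ) 1 :=
  ae_restrict_mem measurableSet_Icc

lemma integral_μ01_eq_intervalIntegral (f : ℝ → ℝ) : ∫ t, f t ∂μ01 = ∫ t in (0:ℝ)..1, f t := by
  rw [μ01, intervalIntegral.integral_of_le zero_le_one, integral_Icc_eq_integral_Ioc]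

lemma Ioc_zero_subset_Icc_zero_one {t : ℝ} (ht : t ∈ Icc (0:ℝ) 1) : Ioc 0 t ⊆ Icc 0 1 :=
  Ioc_subset_Icc_self.trans (Icc_subset_Icc_right ht.2)

lemma setIntegral_Ioc_congr_ae_μ01 {f g : ℝ → ℝ} (hfg : f =ᵐ[μ01] g) {t : ℝ}
    (ht : t ∈ Icc (0:ℝ) 1) : ∫ s in Ioc 0 t, f s = ∫ s in Ioc 0 t, g s :=
  integral_congr_ae (ae_restrict_of_ae_restrict_of_subset (Ioc_zero_subset_Icc_zero_one ht) hfg)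

lemma MeasureTheory.MemLp.integrableOn_Ioc_zero {f : ℝ → ℝ} {p : ℝ≥0∞} (hf : MemLp f p μ01)
    (hp : 1 ≤ p) {t : ℝ} (ht : t ∈ Icc (0:ℝ) 1) : IntegrableOn f (Ioc 0 t) :=
  (hf.integrable hp).mono_measure (Measure.restrict_mono (Ioc_zero_subset_Icc_zero_one ht) le_rfl)

lemma Continuous.memLp_μ01 {E : Type*} [NormedAddCommGroup E] {f : ℝ → E} (hf : Continuous f)
    (p : ℝ≥0∞) : MemLp f p μ01 := by
  obtain ⟨C, hC⟩ := isCompact_Icc.exists_bound_of_continuousOn hf.continuousOn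
  exact MemLp.of_bound hf.aestronglyMeasurable C
    (by filter_upwards [ae_mem_Icc_μ01] with t ht using hC t ht)

lemma MeasureTheory.MemLp.norm_toLp_sq {α : Type*} [MeasurableSpace α] {μ : Measure α}
    {f : α → ℝ} (hf : MemLp f 2 μ) : ‖hf.toLp f‖ ^ 2 = ∫ a, f a ^ 2 ∂μ := by
  rw [← real_inner_self_eq_norm_sq, L2.inner_def]
  refine integral_congr_ae ?_
  filter_upwards [hf.coeFn_toLp] with a ha
  simp [ha, sq]

lemma IsWeakDeriv.add {x' x y' y : L2} (hx : IsWeakDeriv x' x) (hy : IsWeakDeriv y' y) :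
    IsWeakDeriv (x' + y') (x + y) := by
  filter_upwards [hx, hy, Lp.coeFn_add x y, ae_mem_Icc_μ01] with t hxt hyt hadd ht
  rw [hadd, setIntegral_Ioc_congr_ae_μ01 (Lp.coeFn_add x' y') ht]
  simp only [Pi.add_apply]
  rw [integral_add ((Lp.memLp x').integrableOn_Ioc_zero one_le_two ht)
      ((Lp.memLp y').integrableOn_Ioc_zero one_le_two ht), hxt, hyt]

lemma isWeakDeriv_toLp_of_hasDerivAt {f f' : ℝ → ℝ} (hf : MemLp f 2 μ01) (hf' : MemLp f' 2 μ01)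
    (h0 : f 0 = 0) (hderiv : ∀ t ∈ Icc (0:ℝ) 1, HasDerivAt f (f' t) t) :
    IsWeakDeriv (hf'.toLp f') (hf.toLp f) := by
  filter_upwards [hf.coeFn_toLp, ae_mem_Icc_μ01] with t hft ht
  rw [hft, setIntegral_Ioc_congr_ae_μ01 hf'.coeFn_toLp ht, ← intervalIntegral.integral_of_le ht.1,
    intervalIntegral.integral_eq_sub_of_hasDerivAt (f := f), h0, sub_zero]
  · intro s hs
    rw [uIcc_of_le ht.1] at hs
    exact hderiv s ⟨hs.1, hs.2.trans ht.2⟩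
  · exact (intervalIntegrable_iff_integrableOn_Ioc_of_le ht.1).2
      (hf'.integrableOn_Ioc_zero one_le_two ht)

lemma integral_cos_two_pi_nat_mul_sq {m : ℕ} (hm : m ≠ 0) :
    ∫ t in (0:ℝ)..1, cos (2 * π * m * t) ^ 2 = 1 / 2 := by
  have ha : (2 * π * m : ℝ) ≠ 0 := by positivity
  rw [intervalIntegral.integral_comp_mul_left (fun t => cos t ^ 2) ha, integral_cos_sq,
    show 2 * π * m * 1 = (2 * m : ℕ) * π by push_cast; ring, sin_nat_mul_pi]
  simp only [mul_zero, sin_zero, sub_zero, zero_add, Nat.cast_mul, Nat.cast_ofNat, smul_eq_mul]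
  field_simp

lemma exists_isWeakDeriv_sine (c : ℝ) {m : ℕ} (hm : m ≠ 0) :
    ∃ g g' : L2, IsWeakDeriv g' g ∧ ‖g‖ ≤ |c| ∧ ‖g'‖ ^ 2 = (2 * π * m * c) ^ 2 / 2 := by
  set a : ℝ := 2 * π * m
  have hsin : Continuous fun t => c * sin (a * t) := by fun_prop
  have hcos : Continuous fun t => c * a * cos (a * t) := by fun_prop
  refine ⟨(hsin.memLp_μ01 2).toLp _, (hcos.memLp_μ01 2).toLp _,
    isWeakDeriv_toLp_of_hasDerivAt _ _ (by simp) fun t _ => ?_, ?_, ?_⟩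
  · exact (((hasDerivAt_id' t).const_mul a).sin.const_mul c).congr_deriv (by ring)
  · refine Lp.norm_le_of_ae_bound (abs_nonneg c) ?_ |>.trans (by simp [measureUnivNNReal])
    filter_upwards [(hsin.memLp_μ01 2).coeFn_toLp] with t ht
    simpa [ht, abs_mul] using mul_le_of_le_one_right (abs_nonneg c) (abs_sin_le_one (a * t))
  · rw [MemLp.norm_toLp_sq, integral_μ01_eq_intervalIntegral]
    simp_rw [mul_pow _ (cos _)]
    rw [intervalIntegral.integral_const_mul, integral_cos_two_pi_nat_mul_sq hm]
    ring

lemma exists_seq_isWeakDeriv_tendsto_zero_norm_tendsto_atTop :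
    ∃ g g' : ℕ → L2, (∀ n, IsWeakDeriv (g' n) (g n)) ∧ Tendsto g atTop (𝓝 0) ∧
      Tendsto (fun n => ‖g' n‖) atTop atTop := by
  choose g g' hg hg_le hg'_sq using fun n : ℕ =>
    exists_isWeakDeriv_sine (1 / (n + 1)) (m := (n + 1) ^ 2) (by positivity)
  refine ⟨g, g', hg, squeeze_zero_norm (fun n => (hg_le n).trans_eq ?_)
    tendsto_one_div_add_atTop_nhds_zero_nat, tendsto_atTop_mono (fun n => ?_)
    tendsto_natCast_atTop_atTop⟩
  · exact abs_of_pos (by positivity)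
  · rw [← pow_le_pow_iff_left₀ n.cast_nonneg (norm_nonneg _) two_ne_zero, hg'_sq n]
    push_cast
    field_simp
    have hπ : 1 ≤ 2 * π ^ 2 := by nlinarith [pi_gt_three]
    nlinarith [mul_le_mul_of_nonneg_right hπ (sq_nonneg ((n : ℝ) + 1)),
      (n.cast_nonneg : (0 : ℝ) ≤ n)]

lemma tendsto_zero_of_tendsto_norm_weakDeriv_atTop {ι : Type*} {l : Filter ι} {p : L2 → ℝ}
    (hp_nonneg : ∀ x, 0 ≤ p x)
    (hp_vanish : ∀ ε > 0, ∃ R : ℝ, ∀ x x' : L2, IsWeakDeriv x' x → R ≤ ‖x'‖ → p x ≤ ε)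
    {x x' : ι → L2} (hx : ∀ i, IsWeakDeriv (x' i) (x i))
    (hx' : Tendsto (fun i => ‖x' i‖) l atTop) : Tendsto (fun i => p (x i)) l (𝓝 0) := by
  refine tendsto_order.2 ⟨fun a ha => .of_forall fun i => ha.trans_le (hp_nonneg _),
    fun ε hε => ?_⟩
  obtain ⟨R, hR⟩ := hp_vanish (ε / 2) (half_pos hε)
  filter_upwards [hx'.eventually_ge_atTop R] with i hi
  exact (hR _ _ (hx i) hi).trans_lt (half_lt_self hε)

/-- If `p : L² → [0,∞)` is `L²`-continuous and `p(x) → 0` as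
`‖x‖_{H¹₀} → ∞`, then `p` vanishes identically on `H¹₀`. -/
theorem statement16
    (p : L2 → ℝ)
    (hpnonneg : ∀ x : L2, 0 ≤ p x)
    (hpcont : Continuous p)
    (hvanish : ∀ ε : ℝ, 0 < ε → ∃ R : ℝ, 0 < R ∧
      ∀ x x' : L2, IsWeakDeriv x' x → R ≤ ‖x'‖ → p x ≤ ε) :
    ∀ y y' : L2, IsWeakDeriv y' y → p y = 0 := by
  intro y y' hy
  obtain ⟨g, g', hg, hg_lim, hg'_lim⟩ := exists_seq_isWeakDeriv_tendsto_zero_norm_tendsto_atTop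
  have hp_lim : Tendsto (fun n => p (g n + y)) atTop (𝓝 (p y)) := by
    simpa [Function.comp_def] using (hpcont.tendsto _).comp (hg_lim.add_const y)
  have hnorm_lim : Tendsto (fun n => ‖g' n + y'‖) atTop atTop :=
    tendsto_atTop_mono (fun n => by simpa [sub_eq_add_neg] using norm_sub_le_norm_add (g' n) y')
      (tendsto_atTop_add_const_right atTop (-‖y'‖) hg'_lim)
  exact tendsto_nhds_unique hp_lim <| tendsto_zero_of_tendsto_norm_weakDeriv_atTop hpnonneg
    (fun ε hε => (hvanish ε hε).imp fun _ hR => hR.2) (fun n => (hg n).add hy) hnorm_lim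

end
end

section
/- Assume (H1), (H2) and (H3), let X₁,…,X_n be i.i.d. with law P, and let p̂_h(x) = n⁻¹ Σᵢ K_h(‖Xᵢ − x‖²_{L²}). Then there is an absolute constant C (from the covering-number bound N_ε ≤ C·exp(M/ε) for the H¹₀ ball of radius M under the L² metric) such that for all sufficiently small ε > 0 and every M > 0, P( sup_{x ∈ B_{H¹₀}(0,M)} |p̂_h(x) − p_h(x)| ≥ ε ) ≤ C·exp( −32nε²/(25K₀²) + 10MK₁/ε ). -/
/-!
Write `D x = p̂_h(x) - p_h(x)`. By (H1) each `u ↦ K_h(‖u - x‖²)` takes values in `[0, K₀]` and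
is `2K₁`-Lipschitz in `x`, so `D` is `4K₁`-Lipschitz and, for fixed `x`, Hoeffding's inequality
bounds `P(|D x| ≥ t)` by `2 exp(-2nt²/K₀²)`. A single net cannot absorb the Lipschitz error at the
price `exp(10MK₁/ε)`, so we chain over two scales: on a coarse `ε/(12K₁)`-net we ask
`|D y| < 0.89 ε`, and for nearby pairs `(y, z)` of the coarse net and a fine `ε/(80K₁)`-net we ask
`|D y - D z| < ε/20`. Such an increment ranges over an interval of length `O(ε)`, so its Hoeffding
bound is `exp(-18n/529)`, independent of `ε`. For `ε ≤ K₀/30` the factor `n` dominates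
`nε²/K₀²`, for `ε ≤ MK₁/10` the covering numbers fit into `exp(10MK₁/ε)`, and in the only
nontrivial case (the claimed bound below `1`) there is room for the factor `2` and for `C²`.
If `K₁ = 0`, `K_h` is constant on `[0, ∞)` and `D` vanishes identically.
-/

open MeasureTheory ProbabilityTheory Real Set Filter
open scoped InnerProductSpace ENNReal NNReal Topology

noncomputable section

/-- The empirical pseudo-density `p̂_h(x) = n⁻¹ Σᵢ K_h(‖Xᵢ − x‖²)`. -/
def empPseudoDensity {Ω' : Type*} (Xs : ℕ → Ω' → L2) (K : ℝ → ℝ) (h : ℝ)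
    (n : ℕ) (ω : Ω') (x : L2) : ℝ :=
  (n : ℝ)⁻¹ * ∑ i ∈ Finset.range n, Kh K h (‖Xs i ω - x‖ ^ 2)

section Hoeffding

variable {Ω : Type*} [MeasurableSpace Ω] {μ : Measure Ω} [IsProbabilityMeasure μ]

theorem measureReal_abs_avg_sub_ge_le {f : ℕ → Ω → ℝ} (hf : ∀ i, AEMeasurable (f i) μ)
    (hind : iIndepFun f μ) {a b m : ℝ} (hab : ∀ i ω, f i ω ∈ Icc a b) (hm : ∀ i, μ[f i] = m)
    (n : ℕ) {t : ℝ} (ht : 0 ≤ t) :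
    μ.real {ω | t ≤ |(n : ℝ)⁻¹ * ∑ i ∈ Finset.range n, f i ω - m|} ≤
      2 * exp (-2 * n * t ^ 2 / (b - a) ^ 2) := by
  rcases Nat.eq_zero_or_pos n with rfl | hn
  · simpa using measureReal_le_one.trans one_le_two
  have hsub : ∀ i, HasSubgaussianMGF (fun ω ↦ f i ω - m) ((‖b - a‖₊ / 2) ^ 2) μ := fun i ↦
    hm i ▸ hasSubgaussianMGF_of_mem_Icc (hf i) (ae_of_all _ (hab i))
  have hexp : -(n * t) ^ 2 / (2 * n * ((‖b - a‖₊ / 2) ^ 2 : ℝ≥0)) =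
      -2 * n * t ^ 2 / (b - a) ^ 2 := by
    push_cast
    rw [Real.norm_eq_abs, div_pow, sq_abs]
    -- both sides are `0` when `b = a`, by the convention `x / 0 = 0`
    rcases eq_or_ne (b - a) 0 with hba | hba
    · simp [hba]
    · field_simp
  have hupper := HasSubgaussianMGF.measure_sum_range_ge_le_of_iIndepFun
    (hind.comp (fun _ x ↦ x - m) fun _ ↦ measurable_id.sub_const m)
    (fun i _ ↦ hsub i) (n := n) (ε := n * t) (by positivity)
  have hlower := HasSubgaussianMGF.measure_sum_range_ge_le_of_iIndepFun
    (hind.comp (fun _ x ↦ -(x - m)) fun _ ↦ (measurable_id.sub_const m).neg)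
    (fun i _ ↦ (hsub i).neg) (n := n) (ε := n * t) (by positivity)
  rw [hexp] at hupper hlower
  have hevent : {ω | t ≤ |(n : ℝ)⁻¹ * ∑ i ∈ Finset.range n, f i ω - m|} ⊆
      {ω | n * t ≤ ∑ i ∈ Finset.range n, (f i ω - m)} ∪
        {ω | n * t ≤ ∑ i ∈ Finset.range n, -(f i ω - m)} := by
    intro ω (hω : t ≤ _)
    have hn' : (0 : ℝ) < n := by exact_mod_cast hn
    have hsum : ∑ i ∈ Finset.range n, (f i ω - m) =
        n * ((n : ℝ)⁻¹ * ∑ i ∈ Finset.range n, f i ω - m) := by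
      rw [Finset.sum_sub_distrib, Finset.sum_const, Finset.card_range, nsmul_eq_mul]
      field_simp
    simp only [mem_union, mem_ofPred_eq, Finset.sum_neg_distrib, hsum]
    rcases le_abs'.mp hω with h | h
    · right; nlinarith
    · left; nlinarith
  calc _ ≤ _ := measureReal_mono hevent
    _ ≤ _ := measureReal_union_le _ _
    _ ≤ _ := add_le_add hupper hlower
    _ = _ := by ring

end Hoeffding

section EmpiricalDeviation

variable {Ω E : Type*} [MeasurableSpace E] {ν : Measure E}

def empiricalDev (Xs : ℕ → Ω → E) (ν : Measure E) (n : ℕ) (G : E → ℝ) (ω : Ω) : ℝ :=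
  (n : ℝ)⁻¹ * ∑ i ∈ Finset.range n, G (Xs i ω) - ∫ u, G u ∂ν

theorem measureReal_abs_empiricalDev_ge_le [MeasurableSpace Ω] {μ : Measure Ω}
    [IsProbabilityMeasure μ] {Xs : ℕ → Ω → E}
    (hXs : ∀ i, Measurable (Xs i)) (hind : iIndepFun Xs μ) (hlaw : ∀ i, μ.map (Xs i) = ν)
    {G : E → ℝ} (hG : Measurable G) {a b : ℝ} (hab : ∀ u, G u ∈ Icc a b) (n : ℕ) {t : ℝ}
    (ht : 0 ≤ t) :
    μ.real {ω | t ≤ |empiricalDev Xs ν n G ω|} ≤ 2 * exp (-2 * n * t ^ 2 / (b - a) ^ 2) :=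
  measureReal_abs_avg_sub_ge_le (fun i ↦ (hG.comp (hXs i)).aemeasurable)
    (hind.comp (fun _ ↦ G) fun _ ↦ hG) (fun i ω ↦ hab (Xs i ω))
    (fun i ↦ by rw [← hlaw i, integral_map (hXs i).aemeasurable hG.aestronglyMeasurable]; rfl) n ht

theorem empiricalDev_sub {G G' : E → ℝ} (hG : Integrable G ν) (hG' : Integrable G' ν)
    (Xs : ℕ → Ω → E) (n : ℕ) (ω : Ω) :
    empiricalDev Xs ν n (G - G') ω = empiricalDev Xs ν n G ω - empiricalDev Xs ν n G' ω := by
  simp only [empiricalDev, Pi.sub_apply, Finset.sum_sub_distrib, integral_sub hG hG']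
  ring

theorem abs_empiricalDev_le [IsProbabilityMeasure ν] {G : E → ℝ} {c : ℝ} (hG : ∀ u, |G u| ≤ c)
    (Xs : ℕ → Ω → E) (n : ℕ) (ω : Ω) : |empiricalDev Xs ν n G ω| ≤ 2 * c := by
  have hc : 0 ≤ c := (abs_nonneg _).trans (hG (Xs 0 ω))
  have hsum : |∑ i ∈ Finset.range n, G (Xs i ω)| ≤ n * c := by
    simpa using (Finset.abs_sum_le_sum_abs _ _).trans
      (Finset.sum_le_card_nsmul (Finset.range n) _ c fun i _ ↦ hG (Xs i ω))
  have havg : |(n : ℝ)⁻¹ * ∑ i ∈ Finset.range n, G (Xs i ω)| ≤ c := by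
    rw [abs_mul, abs_inv, Nat.abs_cast]
    rcases eq_or_ne n 0 with rfl | hn
    · simpa using hc
    · rw [inv_mul_le_iff₀ (by positivity)]
      exact hsum
  have hint : |∫ u, G u ∂ν| ≤ c := by
    simpa using norm_integral_le_of_norm_le_const (μ := ν) (f := G) (ae_of_all _ hG)
  calc _ ≤ _ := abs_sub _ _
    _ ≤ c + c := add_le_add havg hint
    _ = 2 * c := by ring

theorem empiricalDev_const [IsProbabilityMeasure ν] (Xs : ℕ → Ω → E) {n : ℕ} (hn : n ≠ 0)
    (c : ℝ) (ω : Ω) : empiricalDev Xs ν n (fun _ ↦ c) ω = 0 := by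
  simp [empiricalDev, hn]

end EmpiricalDeviation

section Kernel

variable {K : ℝ → ℝ} {h K0 K1 : ℝ}

theorem abs_Kh_sq_sub_Kh_sq_le (hK : Differentiable ℝ K)
    (hK1 : ∀ t : ℝ, 0 ≤ t → |deriv (Kh K h) (t ^ 2) * t| ≤ K1) {s r : ℝ} (hs : 0 ≤ s)
    (hr : 0 ≤ r) : |Kh K h (s ^ 2) - Kh K h (r ^ 2)| ≤ 2 * K1 * |s - r| := by
  have hKh : Differentiable ℝ (Kh K h) := hK.comp (differentiable_id.div_const h)
  have hderiv (v : ℝ) :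
      HasDerivAt (fun v ↦ Kh K h (v ^ 2)) (deriv (Kh K h) (v ^ 2) * (2 * v)) v := by
    have hsq : HasDerivAt (fun v : ℝ ↦ v ^ 2) (2 * v) v := by simpa using hasDerivAt_pow 2 v
    exact HasDerivAt.comp (h₂ := Kh K h) v (hKh (v ^ 2)).hasDerivAt hsq
  have hbound : ∀ v ∈ Ici (0 : ℝ), ‖deriv (Kh K h) (v ^ 2) * (2 * v)‖ ≤ 2 * K1 := by
    intro v hv
    rw [Real.norm_eq_abs, mul_left_comm, abs_mul, abs_two]
    exact mul_le_mul_of_nonneg_left (hK1 v hv) zero_le_two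
  simpa [Real.norm_eq_abs] using (convex_Ici 0).norm_image_sub_le_of_norm_hasDerivWithin_le
    (fun v _ ↦ (hderiv v).hasDerivWithinAt) hbound hr hs

variable {E : Type*} [SeminormedAddCommGroup E]

def kernelAt (K : ℝ → ℝ) (h : ℝ) (y u : E) : ℝ := Kh K h (‖u - y‖ ^ 2)

theorem continuous_kernelAt (hK : Continuous K) (y : E) : Continuous (kernelAt K h y) := by
  unfold kernelAt Kh
  fun_prop

theorem kernelAt_mem_Icc (hh : 0 ≤ h) (hK : ∀ t : ℝ, 0 ≤ t → 0 ≤ K t)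
    (hK0 : ∀ t : ℝ, 0 ≤ t → |Kh K h (t ^ 2)| ≤ K0) (y u : E) : kernelAt K h y u ∈ Icc 0 K0 :=
  ⟨hK _ (div_nonneg (sq_nonneg _) hh), (le_abs_self _).trans (hK0 _ (norm_nonneg _))⟩

theorem abs_kernelAt_sub_kernelAt_le (hK : Differentiable ℝ K)
    (hK1 : ∀ t : ℝ, 0 ≤ t → |deriv (Kh K h) (t ^ 2) * t| ≤ K1) (y z u : E) :
    |kernelAt K h y u - kernelAt K h z u| ≤ 2 * K1 * ‖y - z‖ := by
  have hK1nonneg : 0 ≤ K1 := (abs_nonneg _).trans (hK1 0 le_rfl)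
  calc _ ≤ 2 * K1 * |‖u - y‖ - ‖u - z‖| :=
        abs_Kh_sq_sub_Kh_sq_le hK hK1 (norm_nonneg _) (norm_nonneg _)
    _ ≤ 2 * K1 * ‖(u - y) - (u - z)‖ := by gcongr; exact abs_norm_sub_norm_le _ _
    _ = 2 * K1 * ‖y - z‖ := by rw [sub_sub_sub_cancel_left, norm_sub_rev]

theorem kernelAt_eq_const (hK : Differentiable ℝ K)
    (hK1 : ∀ t : ℝ, 0 ≤ t → |deriv (Kh K h) (t ^ 2) * t| ≤ 0) (y : E) :
    kernelAt K h y = fun _ ↦ Kh K h 0 :=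
  funext fun u ↦ by simpa [kernelAt, sub_eq_zero] using abs_kernelAt_sub_kernelAt_le hK hK1 y u u

end Kernel

section Chaining

variable {E : Type*} [PseudoMetricSpace E] {L r₁ r₂ t₁ t₂ : ℝ} {T : Set E} {s₁ s₂ : Finset E}

theorem abs_le_of_two_scale_nets {f : E → ℝ} (hf : ∀ x y, |f x - f y| ≤ L * dist x y)
    (hL : 0 ≤ L) (hs₁ : ∀ x ∈ T, ∃ y ∈ s₁, dist x y ≤ r₁)
    (hs₂ : ∀ x ∈ T, ∃ z ∈ s₂, dist x z ≤ r₂) (h₁ : ∀ y ∈ s₁, |f y| < t₁)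
    (h₂ : ∀ y ∈ s₁, ∀ z ∈ s₂, dist y z ≤ r₁ + r₂ → |f y - f z| < t₂) {x : E} (hx : x ∈ T) :
    |f x| ≤ t₁ + t₂ + L * r₂ := by
  obtain ⟨y, hy, hxy⟩ := hs₁ x hx
  obtain ⟨z, hz, hxz⟩ := hs₂ x hx
  have hyz : dist y z ≤ r₁ + r₂ := (dist_triangle_left y z x).trans (add_le_add hxy hxz)
  calc |f x| = |f y - (f y - f z) + (f x - f z)| := by ring_nf
    _ ≤ |f y - (f y - f z)| + |f x - f z| := abs_add_le _ _
    _ ≤ |f y| + |f y - f z| + |f x - f z| := by gcongr; exact abs_sub _ _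
    _ ≤ t₁ + t₂ + L * r₂ := by
      gcongr
      · exact (h₁ y hy).le
      · exact (h₂ y hy z hz hyz).le
      · exact (hf x z).trans (mul_le_mul_of_nonneg_left hxz hL)

theorem measureReal_iSup_abs_ge_le_of_two_scale_nets {Ω : Type*} [MeasurableSpace Ω]
    {μ : Measure Ω} [IsFiniteMeasure μ] {D : E → Ω → ℝ}
    (hD : ∀ x y ω, |D x ω - D y ω| ≤ L * dist x y) (hL : 0 ≤ L)
    (hs₁ : ∀ x ∈ T, ∃ y ∈ s₁, dist x y ≤ r₁) (hs₂ : ∀ x ∈ T, ∃ z ∈ s₂, dist x z ≤ r₂)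
    {ε p₁ p₂ : ℝ} (hε : 0 < ε) (hεt : t₁ + t₂ + L * r₂ < ε)
    (hp₁ : ∀ y ∈ s₁, μ.real {ω | t₁ ≤ |D y ω|} ≤ p₁)
    (hp₂ : ∀ y ∈ s₁, ∀ z ∈ s₂, dist y z ≤ r₁ + r₂ → μ.real {ω | t₂ ≤ |D y ω - D z ω|} ≤ p₂)
    (hp₂0 : 0 ≤ p₂) :
    μ.real {ω | ε ≤ ⨆ x : T, |D x ω|} ≤ s₁.card * p₁ + s₁.card * s₂.card * p₂ := by
  set A₁ : E → Set Ω := fun y ↦ {ω | t₁ ≤ |D y ω|}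
  set A₂ : E × E → Set Ω := fun q ↦ {ω | dist q.1 q.2 ≤ r₁ + r₂ ∧ t₂ ≤ |D q.1 ω - D q.2 ω|}
  have hbad : {ω | ε ≤ ⨆ x : T, |D x ω|} ⊆ (⋃ y ∈ s₁, A₁ y) ∪ ⋃ q ∈ s₁ ×ˢ s₂, A₂ q := by
    intro ω (hω : ε ≤ _)
    by_contra hgood
    simp only [mem_union, mem_iUnion, Finset.mem_product, not_or, not_exists, not_and,
      not_le, A₁, A₂, mem_ofPred_eq] at hgood
    have hsup : ⨆ x : T, |D x ω| ≤ max (t₁ + t₂ + L * r₂) 0 :=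
      Real.iSup_le (fun x ↦ (abs_le_of_two_scale_nets (f := (D · ω)) (hD · · ω) hL hs₁ hs₂
        hgood.1 (fun y hy z hz hyz ↦ hgood.2 (y, z) ⟨hy, hz⟩ hyz) x.2).trans (le_max_left _ _))
        (le_max_right _ _)
    exact (hω.trans hsup).not_gt (max_lt hεt hε)
  have hA₂ : ∀ q ∈ s₁ ×ˢ s₂, μ.real (A₂ q) ≤ p₂ := by
    rintro ⟨y, z⟩ hq
    rw [Finset.mem_product] at hq
    by_cases hyz : dist y z ≤ r₁ + r₂
    · exact (measureReal_mono fun ω hω ↦ hω.2).trans (hp₂ y hq.1 z hq.2 hyz)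
    · simp [A₂, hyz, hp₂0]
  calc μ.real _ ≤ μ.real ((⋃ y ∈ s₁, A₁ y) ∪ ⋃ q ∈ s₁ ×ˢ s₂, A₂ q) := measureReal_mono hbad
    _ ≤ ∑ y ∈ s₁, μ.real (A₁ y) + ∑ q ∈ s₁ ×ˢ s₂, μ.real (A₂ q) :=
      (measureReal_union_le _ _).trans
        (add_le_add (measureReal_biUnion_finset_le _ _) (measureReal_biUnion_finset_le _ _))
    _ ≤ s₁.card * p₁ + (s₁ ×ˢ s₂).card * p₂ := by
      gcongr
      · simpa using Finset.sum_le_card_nsmul _ _ _ hp₁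
      · simpa using Finset.sum_le_card_nsmul _ _ _ hA₂
    _ = _ := by rw [Finset.card_product, Nat.cast_mul]

end Chaining

section KernelProcess

variable {Ω E : Type*} [SeminormedAddCommGroup E] [MeasurableSpace E] [OpensMeasurableSpace E]
  {ν : Measure E} [IsProbabilityMeasure ν] {Xs : ℕ → Ω → E} {K : ℝ → ℝ} {h K0 K1 K2 K3 : ℝ}

theorem integrable_kernelAt (hH1 : AssumpH1 K h K0 K1 K2 K3) (hh : 0 ≤ h) (y : E) :
    Integrable (kernelAt K h y) ν :=
  Integrable.of_mem_Icc 0 K0 (continuous_kernelAt hH1.contDiff.continuous y).aemeasurable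
    (ae_of_all _ (kernelAt_mem_Icc hh hH1.nonneg hH1.bound0 y))

theorem abs_empiricalDev_kernelAt_sub_le (hH1 : AssumpH1 K h K0 K1 K2 K3) (hh : 0 ≤ h)
    (n : ℕ) (y z : E) (ω : Ω) :
    |empiricalDev Xs ν n (kernelAt K h y) ω - empiricalDev Xs ν n (kernelAt K h z) ω| ≤
      4 * K1 * dist y z := by
  rw [← empiricalDev_sub (integrable_kernelAt hH1 hh y) (integrable_kernelAt hH1 hh z),
    dist_eq_norm]
  calc _ ≤ 2 * (2 * K1 * ‖y - z‖) := abs_empiricalDev_le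
        (abs_kernelAt_sub_kernelAt_le (hH1.contDiff.differentiable (by norm_num)) hH1.bound1 y z)
        Xs n ω
    _ = 4 * K1 * ‖y - z‖ := by ring

theorem measureReal_iSup_abs_empiricalDev_kernelAt_ge_le [MeasurableSpace Ω] {μ : Measure Ω}
    [IsProbabilityMeasure μ] (hXs : ∀ i, Measurable (Xs i))
    (hind : iIndepFun Xs μ) (hlaw : ∀ i, μ.map (Xs i) = ν) (hH1 : AssumpH1 K h K0 K1 K2 K3)
    (hh : 0 ≤ h) (hK1 : 0 < K1) {ε : ℝ} (hε : 0 < ε) {T : Set E} {s₁ s₂ : Finset E}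
    (hs₁ : ∀ x ∈ T, ∃ y ∈ s₁, ‖x - y‖ ≤ ε / (12 * K1))
    (hs₂ : ∀ x ∈ T, ∃ z ∈ s₂, ‖x - z‖ ≤ ε / (80 * K1)) (n : ℕ) :
    μ.real {ω | ε ≤ ⨆ x : T, |empiricalDev Xs ν n (kernelAt K h x) ω|} ≤
      s₁.card * (2 * exp (-(7921 / 5000) * (n * ε ^ 2 / K0 ^ 2))) +
        s₁.card * s₂.card * (2 * exp (-(18 / 529) * n)) := by
  have hmeas (y : E) : Measurable (kernelAt K h y) :=
    (continuous_kernelAt hH1.contDiff.continuous y).measurable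
  -- The thresholds `0.89 ε`, `ε / 20` and the Lipschitz error `4K₁ · ε/(80K₁) = ε/20` add up to
  -- `0.99 ε`; an increment between points at distance `≤ ε/(12K₁) + ε/(80K₁)` lies in `[-c, c]`
  -- with `c = 23ε/120`, whence the exponent `2n(ε/20)²/(2c)² = 18n/529`.
  have hr₂ : 4 * K1 * (ε / (80 * K1)) = ε / 20 := by field_simp; ring
  refine measureReal_iSup_abs_ge_le_of_two_scale_nets (t₁ := 89 / 100 * ε) (t₂ := ε / 20)
    (abs_empiricalDev_kernelAt_sub_le hH1 hh n) (by positivity)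
    (by simpa only [dist_eq_norm] using hs₁) (by simpa only [dist_eq_norm] using hs₂) hε
    (by linarith) (fun y _ ↦ ?_) (fun y _ z _ hyz ↦ ?_) (by positivity)
  · refine (measureReal_abs_empiricalDev_ge_le hXs hind hlaw (hmeas y)
      (kernelAt_mem_Icc hh hH1.nonneg hH1.bound0 y) n (by positivity)).trans_eq ?_
    rw [sub_zero]
    congr 2
    ring
  · set c := 2 * K1 * (ε / (12 * K1) + ε / (80 * K1)) with hc
    have hdiff (u : E) : (kernelAt K h y - kernelAt K h z) u ∈ Icc (-c) c := by
      refine abs_le.mp ((abs_kernelAt_sub_kernelAt_le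
        (hH1.contDiff.differentiable (by norm_num)) hH1.bound1 y z u).trans ?_)
      rw [← dist_eq_norm, hc]
      exact mul_le_mul_of_nonneg_left hyz (by positivity)
    have hdev := measureReal_abs_empiricalDev_ge_le hXs hind hlaw ((hmeas y).sub (hmeas z))
      hdiff n (t := ε / 20) (by positivity)
    simp only [empiricalDev_sub (integrable_kernelAt hH1 hh y)
      (integrable_kernelAt hH1 hh z)] at hdev
    refine hdev.trans_eq ?_
    rw [hc]
    congr 2
    field_simp
    ring

end KernelProcess

theorem empPseudoDensity_sub_pseudoDensity {Ω Ω' : Type*} [MeasurableSpace Ω]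
    [MeasurableSpace L2] [OpensMeasurableSpace L2] {P : Measure Ω} {X : Ω → L2}
    (hX : Measurable X) {K : ℝ → ℝ} (hK : Continuous K) (h : ℝ) (Xs : ℕ → Ω' → L2) (n : ℕ)
    (ω : Ω') (y : L2) :
    empPseudoDensity Xs K h n ω y - pseudoDensity P X K h y =
      empiricalDev Xs (P.map X) n (kernelAt K h y) ω := by
  rw [empiricalDev, integral_map hX.aemeasurable (continuous_kernelAt hK y).aestronglyMeasurable]
  rfl

theorem isWeakDeriv_zero : IsWeakDeriv 0 0 := by
  have hsupp : ∀ᵐ t ∂μ01, t ∈ Icc (0 : ℝ) 1 := ae_restrict_mem measurableSet_Icc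
  filter_upwards [Lp.coeFn_zero ℝ 2 μ01, hsupp] with t ht0 ht
  have hae : ⇑(0 : L2) =ᵐ[volume.restrict (Ioc 0 t)] 0 :=
    ae_restrict_of_ae_restrict_of_subset (Ioc_subset_Icc_self.trans (Icc_subset_Icc_right ht.2))
      (Lp.coeFn_zero ℝ 2 μ01)
  rw [integral_congr_ae hae, ht0]
  simp

theorem one_le_of_forall_pos_one_le_mul_exp {C : ℝ} (h : ∀ δ > 0, 1 ≤ C * exp δ) : 1 ≤ C := by
  have hlim : Tendsto (fun δ ↦ C * exp δ) (𝓝[>] 0) (𝓝 C) :=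
    ((by fun_prop : Continuous fun δ ↦ C * exp δ).tendsto' 0 C (by simp)).mono_left
      nhdsWithin_le_nhds
  exact ge_of_tendsto hlim (eventually_nhdsWithin_of_forall h)

theorem one_le_of_covering {C : ℝ} (hcover : ∀ M ε : ℝ, 0 < M → 0 < ε → ∃ s : Finset L2,
      (s.card : ℝ) ≤ C * exp (M / ε) ∧
      ∀ x x' : L2, IsWeakDeriv x' x → ‖x'‖ ≤ M → ∃ y ∈ s, ‖x - y‖ ≤ ε) : 1 ≤ C := by
  refine one_le_of_forall_pos_one_le_mul_exp fun δ hδ ↦ ?_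
  obtain ⟨s, hs, hcov⟩ := hcover δ 1 hδ one_pos
  obtain ⟨y, hy, -⟩ := hcov 0 0 isWeakDeriv_zero (by simpa using hδ.le)
  simpa using (Nat.one_le_cast.mpr (Finset.card_pos.mpr ⟨y, hy⟩)).trans hs

theorem two_mul_exp_le_exp_div_two {x y : ℝ} (h : x + 3 ≤ y) : 2 * exp x ≤ exp y / 2 := by
  have h4 : 4 ≤ exp 3 := by linarith [add_one_le_exp 3]
  have hxy : exp x * exp 3 ≤ exp y := by rw [← exp_add]; exact exp_le_exp.mpr h
  nlinarith [exp_pos x]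

theorem two_scale_tail_le {C A B n N₁ N₂ : ℝ} (hC : 1 ≤ C) (hA : 10 ≤ A) (hn : 900 * B ≤ n)
    (hN₂0 : 0 ≤ N₂) (hN₁ : N₁ ≤ C * exp (12 * A)) (hN₂ : N₂ ≤ C * exp (80 * A))
    (hsmall : C * exp (10 * A - 32 / 25 * B) < 1) :
    N₁ * (2 * exp (-(7921 / 5000) * B)) + N₁ * N₂ * (2 * exp (-(18 / 529) * n)) ≤
      C * exp (10 * A - 32 / 25 * B) := by
  have hC0 : 0 < C := by linarith
  have hlogC : 0 ≤ log C := log_nonneg hC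
  -- `hlog` gives `B > 7.8 A ≥ 78`, which with `n ≥ 900 B` pays for both error terms.
  have hlog : log C + (10 * A - 32 / 25 * B) < 0 := by
    simpa [log_mul hC0.ne' (exp_pos _).ne'] using log_lt_log (by positivity) hsmall
  have h₁ : N₁ * (2 * exp (-(7921 / 5000) * B)) ≤ C * (exp (10 * A - 32 / 25 * B) / 2) :=
    calc _ ≤ C * exp (12 * A) * (2 * exp (-(7921 / 5000) * B)) := by gcongr
      _ = C * (2 * exp (12 * A + -(7921 / 5000) * B)) := by rw [exp_add]; ring
      _ ≤ _ := by gcongr; exact two_mul_exp_le_exp_div_two (by linarith)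
  have h₂ : N₁ * N₂ * (2 * exp (-(18 / 529) * n)) ≤ C * (exp (10 * A - 32 / 25 * B) / 2) :=
    calc _ ≤ C * exp (12 * A) * (C * exp (80 * A)) * (2 * exp (-(18 / 529) * n)) := by gcongr
      _ = C * (2 * exp (log C + 12 * A + 80 * A + -(18 / 529) * n)) := by
        rw [exp_add, exp_add, exp_add, exp_log hC0]; ring
      _ ≤ _ := by gcongr; exact two_mul_exp_le_exp_div_two (by linarith)
  linarith

theorem two_scale_tail_le_of_eps_le {C M K0 K1 ε : ℝ} {n N₁ N₂ : ℕ} (hC : 1 ≤ C)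
    (hK0 : 0 < K0) (hK1 : 0 < K1) (hε : 0 < ε) (hεK0 : ε ≤ K0 / 30) (hεM : ε ≤ M * K1 / 10)
    (hN₁ : (N₁ : ℝ) ≤ C * exp (M / (ε / (12 * K1))))
    (hN₂ : (N₂ : ℝ) ≤ C * exp (M / (ε / (80 * K1))))
    (hsmall : C * exp (-(32 * n * ε ^ 2) / (25 * K0 ^ 2) + 10 * M * K1 / ε) < 1) :
    N₁ * (2 * exp (-(7921 / 5000) * (n * ε ^ 2 / K0 ^ 2))) +
        N₁ * N₂ * (2 * exp (-(18 / 529) * n)) ≤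
      C * exp (-(32 * n * ε ^ 2) / (25 * K0 ^ 2) + 10 * M * K1 / ε) := by
  have hexp : -(32 * n * ε ^ 2) / (25 * K0 ^ 2) + 10 * M * K1 / ε =
      10 * (M * K1 / ε) - 32 / 25 * (n * ε ^ 2 / K0 ^ 2) := by ring
  have hA : 10 ≤ M * K1 / ε := by rw [le_div_iff₀ hε]; linarith
  have hB : 900 * (n * ε ^ 2 / K0 ^ 2) ≤ n := by
    rw [← mul_div_assoc, div_le_iff₀ (by positivity)]
    have : 900 * ε ^ 2 ≤ K0 ^ 2 := by nlinarith
    nlinarith [Nat.cast_nonneg (α := ℝ) n]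
  rw [hexp] at hsmall ⊢
  refine two_scale_tail_le hC hA hB (Nat.cast_nonneg _) ?_ ?_ hsmall
  · convert hN₁ using 3; field_simp
  · convert hN₂ using 3; field_simp

theorem statement17_general
    {Ω : Type*} [MeasurableSpace Ω] (P : Measure Ω)
    {Ω' : Type*} [MeasurableSpace Ω'] (Q : Measure Ω') [IsProbabilityMeasure Q]
    [mL2 : MeasurableSpace L2] [BorelSpace L2]
    (X : Ω → L2) (K : ℝ → ℝ) (h K0 K1 K2 K3 : ℝ) (hh : 0 < h)
    (hH1 : AssumpH1 K h K0 K1 K2 K3)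
    (hXmeas : Measurable X)
    -- the i.i.d. sample:
    (Xs : ℕ → Ω' → L2) (hXsmeas : ∀ i, Measurable (Xs i))
    (hiid : iIndepFun (m := fun _ : ℕ => mL2) Xs Q)
    (hdist : ∀ i, Measure.map (Xs i) Q = Measure.map X P)
    -- the absolute covering-number constant:
    (C : ℝ)
    (hcover : ∀ M ε : ℝ, 0 < M → 0 < ε → ∃ s : Finset L2,
      (s.card : ℝ) ≤ C * Real.exp (M / ε) ∧
      ∀ x x' : L2, IsWeakDeriv x' x → ‖x'‖ ≤ M → ∃ y ∈ s, ‖x - y‖ ≤ ε) :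
    ∀ M : ℝ, 0 < M → ∃ ε₀ > (0:ℝ), ∀ ε : ℝ, 0 < ε → ε ≤ ε₀ → ∀ n : ℕ,
      Q {ω' : Ω' | ε ≤ ⨆ z : {x : L2 // ∃ x' : L2, IsWeakDeriv x' x ∧ ‖x'‖ ≤ M},
          |empPseudoDensity Xs K h n ω' z.1 - pseudoDensity P X K h z.1|}
        ≤ ENNReal.ofReal
            (C * Real.exp (-(32 * n * ε ^ 2) / (25 * K0 ^ 2) + 10 * M * K1 / ε)) := by
  intro M hM
  have hC : 1 ≤ C := one_le_of_covering hcover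
  have hK0 : 0 ≤ K0 := (abs_nonneg _).trans (hH1.bound0 0 le_rfl)
  have hK1 : 0 ≤ K1 := (abs_nonneg _).trans (hH1.bound1 0 le_rfl)
  refine ⟨if 0 < K0 ∧ 0 < K1 then min (K0 / 30) (M * K1 / 10) else 1, ?_, ?_⟩
  · split_ifs with hK
    · exact lt_min (by linarith [hK.1]) (by have := hK.2; positivity)
    · exact one_pos
  intro ε hε hεle n
  have : IsProbabilityMeasure (P.map X) :=
    hdist 0 ▸ Measure.isProbabilityMeasure_map (hXsmeas 0).aemeasurable
  simp only [empPseudoDensity_sub_pseudoDensity hXmeas hH1.contDiff.continuous]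
  rw [← ofReal_measureReal]
  refine ENNReal.ofReal_le_ofReal ?_
  by_cases htriv : 1 ≤ C * exp (-(32 * n * ε ^ 2) / (25 * K0 ^ 2) + 10 * M * K1 / ε)
  · exact measureReal_le_one.trans htriv
  push Not at htriv
  have hexp_neg : -(32 * n * ε ^ 2) / (25 * K0 ^ 2) + 10 * M * K1 / ε < 0 := by
    by_contra! hnonneg
    exact htriv.not_ge (one_le_mul_of_one_le_of_one_le hC (one_le_exp hnonneg))
  rcases hK1.eq_or_lt with rfl | hK1pos
  · have hn : n ≠ 0 := by
      rintro rfl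
      simp at hexp_neg
    simp [kernelAt_eq_const (hH1.contDiff.differentiable (by norm_num)) hH1.bound1,
      empiricalDev_const _ hn, not_le.mpr hε]
    exact mul_nonneg (zero_le_one.trans hC) (exp_pos _).le
  · have hK0pos : 0 < K0 := hK0.lt_of_ne fun hK0z ↦ by
      have : 0 < 10 * M * K1 / ε := by positivity
      simp [← hK0z] at hexp_neg
      linarith
    rw [if_pos ⟨hK0pos, hK1pos⟩, le_min_iff] at hεle
    obtain ⟨s₁, hs₁card, hs₁⟩ := hcover M (ε / (12 * K1)) hM (by positivity)
    obtain ⟨s₂, hs₂card, hs₂⟩ := hcover M (ε / (80 * K1)) hM (by positivity)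
    refine (measureReal_iSup_abs_empiricalDev_kernelAt_ge_le
      (T := {x | ∃ x', IsWeakDeriv x' x ∧ ‖x'‖ ≤ M}) hXsmeas hiid hdist hH1 hh.le hK1pos hε
      (fun x ⟨x', hx', hx'M⟩ ↦ hs₁ x x' hx' hx'M) (fun x ⟨x', hx', hx'M⟩ ↦ hs₂ x x' hx' hx'M)
      n).trans ?_
    exact two_scale_tail_le_of_eps_le hC hK0pos hK1pos hε hεle.1 hεle.2 hs₁card hs₂card htriv

/-- Lemma 12 of the paper. Under (H1), (H2), (H3), for i.i.d. samples
`X₁,…,X_n ∼ P` and for all sufficiently small `ε > 0` and every `M > 0`,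
`P(sup_{x ∈ B_{H¹₀}(0,M)} |p̂_h(x) − p_h(x)| ≥ ε) ≤ C exp(−32nε²/(25K₀²) + 10MK₁/ε)`,
where `C` is the absolute constant with `N_ε ≤ C exp(M/ε)` for the `L²` covering numbers
of the `H¹₀` ball of radius `M`. -/
theorem statement17
    {Ω : Type*} [MeasurableSpace Ω] (P : Measure Ω) [IsProbabilityMeasure P]
    {Ω' : Type*} [MeasurableSpace Ω'] (Q : Measure Ω') [IsProbabilityMeasure Q]
    [mL2 : MeasurableSpace L2] [BorelSpace L2]
    (X X' : Ω → L2) (K : ℝ → ℝ) (h K0 K1 K2 K3 M1 N1 : ℝ) (hh : 0 < h)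
    (hH1 : AssumpH1 K h K0 K1 K2 K3)
    (hH2 : AssumpH2 K)
    (hXmeas : Measurable X) (hX'meas : AEStronglyMeasurable X' P)
    (hXH10 : ∀ᵐ ω ∂P, IsWeakDeriv (X' ω) (X ω))
    (hXint : Integrable (fun ω => ‖X ω‖) P) (hX'int : Integrable (fun ω => ‖X' ω‖) P)
    (hM1 : (∫ ω, ‖X ω‖ ∂P) ≤ M1) (hN1 : (∫ ω, ‖X' ω‖ ∂P) ≤ N1)
    -- the i.i.d. sample:
    (Xs : ℕ → Ω' → L2) (hXsmeas : ∀ i, Measurable (Xs i))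
    (hiid : iIndepFun (m := fun _ : ℕ => mL2) Xs Q)
    (hdist : ∀ i, Measure.map (Xs i) Q = Measure.map X P)
    -- the absolute covering-number constant:
    (C : ℝ) (hC : 0 < C)
    (hcover : ∀ M ε : ℝ, 0 < M → 0 < ε → ∃ s : Finset L2,
      (s.card : ℝ) ≤ C * Real.exp (M / ε) ∧
      ∀ x x' : L2, IsWeakDeriv x' x → ‖x'‖ ≤ M → ∃ y ∈ s, ‖x - y‖ ≤ ε) :
    ∀ M : ℝ, 0 < M → ∃ ε₀ > (0:ℝ), ∀ ε : ℝ, 0 < ε → ε ≤ ε₀ → ∀ n : ℕ,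
      Q {ω' : Ω' | ε ≤ ⨆ z : {x : L2 // ∃ x' : L2, IsWeakDeriv x' x ∧ ‖x'‖ ≤ M},
          |empPseudoDensity Xs K h n ω' z.1 - pseudoDensity P X K h z.1|}
        ≤ ENNReal.ofReal
            (C * Real.exp (-(32 * n * ε ^ 2) / (25 * K0 ^ 2) + 10 * M * K1 / ε)) :=
  statement17_general P Q (mL2 := mL2) X K h K0 K1 K2 K3 hh hH1 hXmeas Xs hXsmeas hiid hdist C
    hcover

end
end
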